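/- arXiv:1203.1024 — 8 statements merged into one kernel-verified Lean document; each statement's English description precedes it below -/
import Mathlib

section
/- Let Ω = {0,1}^S be a finite product probability space with product measure, and let A be an increasing event independent of each of the increasing events B_1, ..., B_m. Then A is independent of B_1 ∩ ... ∩ B_m, and also independent of B_1^c ∩ ... ∩ B_m^c. -/
/-!
Harris's inequality: the point masses of a product measure on `{0,1}^S` satisfy
`μ{a} μ{b} = μ{a ⊓ b} μ{a ⊔ b}`, so by the FKG inequality any two increasing events are
positively correlated. If the increasing event `A` is independent of the increasing events `Y`
and `Z`, inclusion–exclusion gives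
`μ(A ∩ (Y ∩ Z)) + μ(A ∩ (Y ∪ Z)) = μ(A) (μ(Y ∩ Z) + μ(Y ∪ Z))`,
and Harris bounds each summand on the left from below by the matching one on the right, so both
are equalities. Induction on the number of events makes `A` independent of `⋂ i, B i` and of
`⋃ i, B i`, and passing to the complement of `⋃ i, B i = (⋂ i, (B i)ᶜ)ᶜ` gives the second claim.
-/

open MeasureTheory Set

lemma IsUpperSet.monotone_indicator_one {α : Type*} [Preorder α] {X : Set α}
    (hX : IsUpperSet X) : Monotone (X.indicator (1 : α → ℝ)) := by
  intro a b hab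
  by_cases ha : a ∈ X
  · simp [ha, hX hab ha]
  · simp only [indicator_of_notMem ha]
    exact indicator_nonneg (fun _ _ => zero_le_one) b

namespace MeasureTheory

variable {α : Type*}

def Measure.HasPositiveCorrelations [MeasurableSpace α] [LE α] (μ : Measure α) : Prop :=
  ∀ ⦃X Y : Set α⦄, IsUpperSet X → IsUpperSet Y → μ.real X * μ.real Y ≤ μ.real (X ∩ Y)

variable [MeasurableSpace α]

lemma sum_measureReal_singleton_mul_indicator [Fintype α] [MeasurableSingletonClass α]
    (μ : Measure α) [SigmaFinite μ] (X : Set α) :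
    ∑ a, μ.real {a} * X.indicator 1 a = μ.real X := by
  classical
  simp [Set.indicator_apply, Finset.sum_ite]

theorem Measure.hasPositiveCorrelations_of_fkg [Finite α] [DistribLattice α]
    [MeasurableSingletonClass α] {μ : Measure α} [IsProbabilityMeasure μ]
    (hμ : ∀ a b, μ.real {a} * μ.real {b} ≤ μ.real {a ⊓ b} * μ.real {a ⊔ b}) :
    μ.HasPositiveCorrelations := by
  intro X Y hX hY
  have := Fintype.ofFinite α
  have key := fkg (X.indicator 1) (Y.indicator 1) (fun a => μ.real {a})
    (fun _ => measureReal_nonneg)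
    (indicator_nonneg fun _ _ => zero_le_one) (indicator_nonneg fun _ _ => zero_le_one)
    hX.monotone_indicator_one hY.monotone_indicator_one hμ
  simp_rw [← Pi.mul_apply (X.indicator 1), ← inter_indicator_one,
    sum_measureReal_singleton_mul_indicator, sum_measureReal_singleton, Finset.coe_univ,
    probReal_univ, one_mul] at key
  exact key

section Pi

variable {ι : Type*} [Fintype ι] {β : ι → Type*} [∀ i, LinearOrder (β i)]
  [∀ i, MeasurableSpace (β i)] (μ : ∀ i, Measure (β i))

theorem Measure.pi_singleton_mul_pi_singleton [∀ i, SigmaFinite (μ i)] (a b : ∀ i, β i) :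
    Measure.pi μ {a} * Measure.pi μ {b} = Measure.pi μ {a ⊓ b} * Measure.pi μ {a ⊔ b} := by
  simp only [pi_singleton, ← Finset.prod_mul_distrib, Pi.inf_apply, Pi.sup_apply]
  refine Finset.prod_congr rfl fun i _ => ?_
  rcases le_total (a i) (b i) with h | h
  · rw [inf_eq_left.2 h, sup_eq_right.2 h]
  · rw [inf_eq_right.2 h, sup_eq_left.2 h, mul_comm]

theorem Measure.hasPositiveCorrelations_pi [∀ i, Finite (β i)]
    [∀ i, MeasurableSingletonClass (β i)] [∀ i, IsProbabilityMeasure (μ i)] :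
    (Measure.pi μ).HasPositiveCorrelations :=
  hasPositiveCorrelations_of_fkg fun a b => by
    simp only [measureReal_def, ← ENNReal.toReal_mul]
    rw [pi_singleton_mul_pi_singleton]

end Pi

theorem measure_inter_eq_mul_iff_measureReal {μ : Measure α} [IsFiniteMeasure μ] {s t : Set α} :
    μ (s ∩ t) = μ s * μ t ↔ μ.real (s ∩ t) = μ.real s * μ.real t := by
  rw [measureReal_def, measureReal_def, measureReal_def, ← ENNReal.toReal_mul,
    ENNReal.toReal_eq_toReal_iff' (measure_ne_top _ _) (by finiteness)]

theorem measureReal_inter_compl_eq_mul {μ : Measure α} [IsProbabilityMeasure μ] {A U : Set α}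
    (hU : MeasurableSet U) (h : μ.real (A ∩ U) = μ.real A * μ.real U) :
    μ.real (A ∩ Uᶜ) = μ.real A * μ.real Uᶜ := by
  have hsplit : μ.real (A ∩ U) + μ.real (A ∩ Uᶜ) = μ.real A := by
    rw [← sdiff_eq, measureReal_inter_add_sdiff hU]
  rw [probReal_compl_eq_one_sub hU]
  linear_combination hsplit - h

namespace Measure.HasPositiveCorrelations

variable [Preorder α] {μ : Measure α} (hμ : μ.HasPositiveCorrelations) {A : Set α}
include hμ

theorem measureReal_inter_inter_eq_mul_and_inter_union_eq_mul [IsFiniteMeasure μ]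
    {Y Z : Set α} (hA : IsUpperSet A) (hY : IsUpperSet Y) (hZ : IsUpperSet Z)
    (hAm : MeasurableSet A) (hZm : MeasurableSet Z)
    (hAY : μ.real (A ∩ Y) = μ.real A * μ.real Y) (hAZ : μ.real (A ∩ Z) = μ.real A * μ.real Z) :
    μ.real (A ∩ (Y ∩ Z)) = μ.real A * μ.real (Y ∩ Z) ∧
      μ.real (A ∩ (Y ∪ Z)) = μ.real A * μ.real (Y ∪ Z) := by
  have h_inter := hμ hA (hY.inter hZ)
  have h_union := hμ hA (hY.union hZ)
  have h_sum : μ.real A * μ.real (Y ∪ Z) + μ.real A * μ.real (Y ∩ Z) =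
      μ.real (A ∩ (Y ∪ Z)) + μ.real (A ∩ (Y ∩ Z)) := by
    rw [← mul_add, measureReal_union_add_inter hZm, mul_add, ← hAY, ← hAZ,
      inter_union_distrib_left, inter_inter_distrib_left,
      measureReal_union_add_inter (hAm.inter hZm)]
  constructor <;> linarith

variable {ι : Type*} {B : ι → Set α} (hA : IsUpperSet A) (hB : ∀ i, IsUpperSet (B i))
  (hAm : MeasurableSet A) (hBm : ∀ i, MeasurableSet (B i))
  (hAB : ∀ i, μ.real (A ∩ B i) = μ.real A * μ.real (B i))
include hA hB hAm hBm hAB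

theorem measureReal_inter_biInter_eq_mul [IsProbabilityMeasure μ] (t : Finset ι) :
    μ.real (A ∩ ⋂ i ∈ t, B i) = μ.real A * μ.real (⋂ i ∈ t, B i) := by
  classical
  induction t using Finset.induction_on with
  | empty => simp
  | insert a t _ ih =>
    rw [Finset.set_biInter_insert]
    exact (hμ.measureReal_inter_inter_eq_mul_and_inter_union_eq_mul hA (hB a)
      (isUpperSet_iInter₂ fun i _ => hB i) hAm (t.measurableSet_biInter fun i _ => hBm i)
      (hAB a) ih).1

theorem measureReal_inter_biUnion_eq_mul [IsFiniteMeasure μ] (t : Finset ι) :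
    μ.real (A ∩ ⋃ i ∈ t, B i) = μ.real A * μ.real (⋃ i ∈ t, B i) := by
  classical
  induction t using Finset.induction_on with
  | empty => simp
  | insert a t _ ih =>
    rw [Finset.set_biUnion_insert]
    exact (hμ.measureReal_inter_inter_eq_mul_and_inter_union_eq_mul hA (hB a)
      (isUpperSet_iUnion₂ fun i _ => hB i) hAm (t.measurableSet_biUnion fun i _ => hBm i)
      (hAB a) ih).2

end Measure.HasPositiveCorrelations

end MeasureTheory

/-- In a finite product probability space `{0,1}^S`, if an increasing event `A` is independent
of each of the increasing events `B 1, …, B m`, then `A` is independent of `⋂ i, B i` and of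
`⋂ i, (B i)ᶜ`. -/
theorem indep_iInter_of_increasing
    {S : Type*} [Fintype S] (μs : S → Measure Bool) [∀ s, IsProbabilityMeasure (μs s)]
    (m : ℕ) (A : Set (S → Bool)) (B : Fin m → Set (S → Bool))
    (hAinc : ∀ ω ω' : S → Bool, (∀ s, ω s ≤ ω' s) → ω ∈ A → ω' ∈ A)
    (hBinc : ∀ i, ∀ ω ω' : S → Bool, (∀ s, ω s ≤ ω' s) → ω ∈ B i → ω' ∈ B i)
    (hindep : ∀ i, Measure.pi μs (A ∩ B i) = Measure.pi μs A * Measure.pi μs (B i)) :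
    Measure.pi μs (A ∩ ⋂ i, B i) = Measure.pi μs A * Measure.pi μs (⋂ i, B i) ∧
    Measure.pi μs (A ∩ ⋂ i, (B i)ᶜ) = Measure.pi μs A * Measure.pi μs (⋂ i, (B i)ᶜ) := by
  have hμ := Measure.hasPositiveCorrelations_pi μs
  have hA : IsUpperSet A := fun ω ω' h => hAinc ω ω' h
  have hB (i : Fin m) : IsUpperSet (B i) := fun ω ω' h => hBinc i ω ω' h
  have hmeas (X : Set (S → Bool)) : MeasurableSet X := X.toFinite.measurableSet
  have hAB (i : Fin m) := measure_inter_eq_mul_iff_measureReal.1 (hindep i)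
  have h_inter := hμ.measureReal_inter_biInter_eq_mul hA hB (hmeas A) (fun _ => hmeas _) hAB
    Finset.univ
  have h_union := hμ.measureReal_inter_biUnion_eq_mul hA hB (hmeas A) (fun _ => hmeas _) hAB
    Finset.univ
  simp only [Finset.mem_univ, iInter_true, iUnion_true] at h_inter h_union
  rw [← compl_iUnion, measure_inter_eq_mul_iff_measureReal, measure_inter_eq_mul_iff_measureReal]
  exact ⟨h_inter, measureReal_inter_compl_eq_mul (hmeas _) h_union⟩
end

section
/- Let A_1, ..., A_k be events in a family I closed under intersections and unions in which any two events are positively correlated. Let X = Σ_i 1_{A_i}, μ = E[X], and Δ = Σ_i Σ_{j~i} Pr(A_i ∩ A_j), where i ~ j means i ≠ j and A_i, A_j are dependent. Then Pr(X = 0) ≤ exp(−μ + Δ/2). -/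
/-!
Order the events and let `C` be the event that none of the earlier ones occurs. Split the
earlier events into those dependent on `A i` (set `D`) and the rest (set `E`), with `C_E` the
event that no event of `E` occurs. Closure of `I` under unions puts every finite union of events
into `I`, so positive correlation makes each `A i ∩ A j` negatively correlated with `C_E`; closure
under intersections and inclusion–exclusion make `A i`, independent of every event of `E`,
positively correlated with `C_E`. With the union bound this gives
`Pr(A i ∩ C) ≥ (Pr(A i) - ∑_{j ∈ D} Pr(A i ∩ A j)) Pr(C)`, hence
`Pr(C ∩ (A i)ᶜ) ≤ Pr(C) exp(-Pr(A i) + ∑_{j ∈ D} Pr(A i ∩ A j))` by `1 - x ≤ exp(-x)`.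
Multiplying over `i` counts every dependent pair once, which is `Δ / 2`.
-/

open MeasureTheory Finset Real
open scoped Classical

section

variable {Ω ι : Type*} [MeasurableSpace Ω] {P : Measure Ω}

theorem measureReal_inter_compl_sub_mul [IsProbabilityMeasure P] (B : Set Ω) {U : Set Ω}
    (hU : MeasurableSet U) :
    P.real (B ∩ Uᶜ) - P.real B * P.real Uᶜ = P.real B * P.real U - P.real (B ∩ U) := by
  have hsplit := measureReal_inter_add_sdiff (μ := P) (s := B) hU
  rw [Set.sdiff_eq] at hsplit
  rw [measureReal_compl hU, probReal_univ]
  linear_combination hsplit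

theorem measureReal_le_inter_biInter_compl_add_sum [IsFiniteMeasure P] (X : Set Ω)
    (f : ι → Set Ω) (s : Finset ι) :
    P.real X ≤ P.real (X ∩ ⋂ j ∈ s, (f j)ᶜ) + ∑ j ∈ s, P.real (X ∩ f j) := by
  have hcover : X ⊆ (X ∩ ⋂ j ∈ s, (f j)ᶜ) ∪ ⋃ j ∈ s, X ∩ f j := by
    intro x hx
    by_cases h : ∃ j ∈ s, x ∈ f j
    · obtain ⟨j, hj, hxj⟩ := h
      exact Or.inr (Set.mem_biUnion hj ⟨hx, hxj⟩)
    · push Not at h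
      exact Or.inl ⟨hx, Set.mem_iInter₂.2 h⟩
  calc P.real X ≤ P.real ((X ∩ ⋂ j ∈ s, (f j)ᶜ) ∪ ⋃ j ∈ s, X ∩ f j) := measureReal_mono hcover
    _ ≤ P.real (X ∩ ⋂ j ∈ s, (f j)ᶜ) + P.real (⋃ j ∈ s, X ∩ f j) := measureReal_union_le _ _
    _ ≤ _ := by gcongr; exact measureReal_biUnion_finset_le s _

theorem Finset.sum_sum_eq_two_mul_sum_sum_lt {M : Type*} [LinearOrder ι] [AddCommMonoid M]
    (s : Finset ι) (g : ι → ι → M) (hsymm : ∀ i j, g i j = g j i) (hdiag : ∀ i, g i i = 0) :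
    ∑ i ∈ s, ∑ j ∈ s, g i j = 2 • ∑ i ∈ s, ∑ j ∈ s with j < i, g i j := by
  have hsplit : ∀ i j, g i j = (if j < i then g i j else 0) + if i < j then g i j else 0 := by
    intro i j
    rcases lt_trichotomy i j with h | rfl | h
    · simp [h, h.not_gt]
    · simp [hdiag]
    · simp [h, h.not_gt]
  have hswap : ∑ i ∈ s, ∑ j ∈ s, (if i < j then g i j else 0)
      = ∑ i ∈ s, ∑ j ∈ s, (if j < i then g i j else 0) := by
    rw [sum_comm]
    simp_rw [hsymm]
  calc ∑ i ∈ s, ∑ j ∈ s, g i j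
      = ∑ i ∈ s, ∑ j ∈ s, ((if j < i then g i j else 0) + if i < j then g i j else 0) := by
        simp_rw [← hsplit]
    _ = 2 • ∑ i ∈ s, ∑ j ∈ s with j < i, g i j := by
        simp_rw [sum_add_distrib, hswap, sum_filter, two_nsmul]

theorem sub_le_mul_exp_neg {c c' x t : ℝ} (hx : 0 ≤ x) (hc : 0 ≤ c) (hcc' : c ≤ c')
    (h : t * c' ≤ x) : c - x ≤ c * exp (-t) := by
  rcases le_or_gt t 0 with ht | ht
  · nlinarith [one_le_exp (neg_nonneg.2 ht)]
  · nlinarith [add_one_le_exp (-t)]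

def IsPosCorrelated (P : Measure Ω) (I : Set (Set Ω)) : Prop :=
  ∀ A ∈ I, ∀ B ∈ I, P.real A * P.real B ≤ P.real (A ∩ B)

namespace IsPosCorrelated

variable {I : Set (Set Ω)} {B : Set Ω} {f : ι → Set Ω} {s : Finset ι}

theorem mul_le_inter_biUnion (hP : IsPosCorrelated P I) (hsup : SupClosed I) (hB : B ∈ I)
    (hf : ∀ j ∈ s, f j ∈ I) :
    P.real B * P.real (⋃ j ∈ s, f j) ≤ P.real (B ∩ ⋃ j ∈ s, f j) := by
  rcases s.eq_empty_or_nonempty with rfl | hs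
  · simp
  · rw [← sup_set_eq_biUnion]
    exact hP B hB _ (hsup.finsetSup_mem hs hf)

theorem inter_biInter_compl_le_mul [IsProbabilityMeasure P] (hP : IsPosCorrelated P I)
    (hsup : SupClosed I) (hB : B ∈ I) (hf : ∀ j ∈ s, f j ∈ I)
    (hfm : ∀ j ∈ s, MeasurableSet (f j)) :
    P.real (B ∩ ⋂ j ∈ s, (f j)ᶜ) ≤ P.real B * P.real (⋂ j ∈ s, (f j)ᶜ) := by
  simp_rw [← Set.compl_iUnion₂]
  linarith [measureReal_inter_compl_sub_mul (P := P) B (s.measurableSet_biUnion hfm),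
    hP.mul_le_inter_biUnion hsup hB hf]

theorem inter_biUnion_le_mul_of_indep [IsFiniteMeasure P] (hP : IsPosCorrelated P I)
    (hsup : SupClosed I) (hinf : InfClosed I) (hB : B ∈ I) (hf : ∀ j ∈ s, f j ∈ I)
    (hfm : ∀ j ∈ s, MeasurableSet (f j))
    (hindep : ∀ j ∈ s, P.real (B ∩ f j) = P.real B * P.real (f j)) :
    P.real (B ∩ ⋃ j ∈ s, f j) ≤ P.real B * P.real (⋃ j ∈ s, f j) := by
  induction s using Finset.induction_on with
  | empty => simp
  | insert a s ha ih =>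
    simp only [mem_insert, forall_eq_or_imp] at hf hfm hindep
    rw [set_biUnion_insert]
    set U := ⋃ j ∈ s, f j
    have hUB := ih hf.2 hfm.2 hindep.2
    have hinterU : f a ∩ U = ⋃ j ∈ s, f a ∩ f j := Set.inter_iUnion₂ _ _
    have hcorrU : P.real B * P.real (f a ∩ U) ≤ P.real (B ∩ (f a ∩ U)) := by
      rw [hinterU]
      exact hP.mul_le_inter_biUnion hsup hB fun j hj ↦ hinf hf.1 (hf.2 j hj)
    -- inclusion–exclusion inside `B`, splitting along `f a` so that `B` need not be measurable
    have hsplitX := measureReal_inter_add_sdiff (μ := P) (s := B ∩ (f a ∪ U)) hfm.1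
    have hsplitU := measureReal_inter_add_sdiff (μ := P) (s := B ∩ U) hfm.1
    have hX1 : B ∩ (f a ∪ U) ∩ f a = B ∩ f a := by
      ext; simp only [Set.mem_inter_iff, Set.mem_union]; tauto
    have hX2 : (B ∩ (f a ∪ U)) \ f a = (B ∩ U) \ f a := by
      ext; simp only [Set.mem_inter_iff, Set.mem_union, Set.mem_sdiff]; tauto
    have hU1 : B ∩ U ∩ f a = B ∩ (f a ∩ U) := by
      ext; simp only [Set.mem_inter_iff]; tauto
    rw [hX1, hX2] at hsplitX
    rw [hU1] at hsplitU
    have hunion := measureReal_union_add_inter' hfm.1 (h₂ := measure_ne_top P U)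
    linear_combination hUB + hcorrU - hsplitX + hsplitU + hindep.1 - P.real B * hunion

theorem mul_le_inter_biInter_compl_of_indep [IsProbabilityMeasure P]
    (hP : IsPosCorrelated P I) (hsup : SupClosed I) (hinf : InfClosed I) (hB : B ∈ I)
    (hf : ∀ j ∈ s, f j ∈ I) (hfm : ∀ j ∈ s, MeasurableSet (f j))
    (hindep : ∀ j ∈ s, P.real (B ∩ f j) = P.real B * P.real (f j)) :
    P.real B * P.real (⋂ j ∈ s, (f j)ᶜ) ≤ P.real (B ∩ ⋂ j ∈ s, (f j)ᶜ) := by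
  simp_rw [← Set.compl_iUnion₂]
  linarith [measureReal_inter_compl_sub_mul (P := P) B (s.measurableSet_biUnion hfm),
    hP.inter_biUnion_le_mul_of_indep hsup hinf hB hf hfm hindep]

theorem sub_sum_mul_le_inter_biInter_compl [IsProbabilityMeasure P] (hP : IsPosCorrelated P I)
    (hsup : SupClosed I) (hinf : InfClosed I) (hB : B ∈ I) (hf : ∀ j, f j ∈ I)
    (hfm : ∀ j, MeasurableSet (f j)) {D E : Finset ι}
    (hindep : ∀ j ∈ E, P.real (B ∩ f j) = P.real B * P.real (f j)) :
    (P.real B - ∑ j ∈ D, P.real (B ∩ f j)) * P.real (⋂ j ∈ E, (f j)ᶜ) ≤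
      P.real (B ∩ ⋂ j ∈ D ∪ E, (f j)ᶜ) := by
  set CE := ⋂ j ∈ E, (f j)ᶜ
  have hcover := measureReal_le_inter_biInter_compl_add_sum (P := P) (B ∩ CE) f D
  have hset : B ∩ CE ∩ ⋂ j ∈ D, (f j)ᶜ = B ∩ ⋂ j ∈ D ∪ E, (f j)ᶜ := by
    rw [set_biInter_inter]; ext; simp only [Set.mem_inter_iff]; tauto
  rw [hset] at hcover
  have hpair : ∀ j ∈ D, P.real (B ∩ CE ∩ f j) ≤ P.real (B ∩ f j) * P.real CE := fun j _ ↦ by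
    rw [show B ∩ CE ∩ f j = B ∩ f j ∩ CE by ext; simp only [Set.mem_inter_iff]; tauto]
    exact hP.inter_biInter_compl_le_mul hsup (hinf hB (hf j)) (fun j _ ↦ hf j) fun j _ ↦ hfm j
  have hlow := hP.mul_le_inter_biInter_compl_of_indep hsup hinf hB (fun j _ ↦ hf j)
    (fun j _ ↦ hfm j) hindep
  have hsum := sum_le_sum hpair
  rw [← sum_mul] at hsum
  rw [sub_mul]
  linarith

theorem measureReal_biInter_insert_compl_le [IsProbabilityMeasure P] [DecidableEq ι]
    (hP : IsPosCorrelated P I) (hsup : SupClosed I) (hinf : InfClosed I) (hf : ∀ j, f j ∈ I)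
    (hfm : ∀ j, MeasurableSet (f j)) (i : ι) (s : Finset ι) (r : ι → Prop)
    (hindep : ∀ j ∈ s, ¬ r j → P.real (f i ∩ f j) = P.real (f i) * P.real (f j)) :
    P.real (⋂ j ∈ insert i s, (f j)ᶜ) ≤
      P.real (⋂ j ∈ s, (f j)ᶜ) * exp (-(P.real (f i) - ∑ j ∈ s with r j, P.real (f i ∩ f j))) := by
  set C := ⋂ j ∈ s, (f j)ᶜ
  have hkey := hP.sub_sum_mul_le_inter_biInter_compl hsup hinf (hf i) hf hfm
    (D := {j ∈ s | r j}) (E := {j ∈ s | ¬ r j}) fun j hj ↦ by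
      rw [mem_filter] at hj; exact hindep j hj.1 hj.2
  rw [filter_union_filter_not_eq] at hkey
  have hsub : C ⊆ ⋂ j ∈ {j ∈ s | ¬ r j}, (f j)ᶜ :=
    Set.biInter_subset_biInter_left fun j hj ↦ (mem_filter.1 hj).1
  have hinsert : ⋂ j ∈ insert i s, (f j)ᶜ = C \ f i := by
    rw [set_biInter_insert, Set.sdiff_eq, Set.inter_comm]
  have hdiff : P.real (C \ f i) = P.real C - P.real (f i ∩ C) := by
    rw [Set.inter_comm]; linarith [measureReal_inter_add_sdiff (μ := P) (s := C) (hfm i)]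
  rw [hinsert, hdiff]
  exact sub_le_mul_exp_neg measureReal_nonneg measureReal_nonneg (measureReal_mono hsub) hkey

theorem measureReal_biInter_compl_le_exp [IsProbabilityMeasure P] [LinearOrder ι]
    (hP : IsPosCorrelated P I) (hsup : SupClosed I) (hinf : InfClosed I) (hf : ∀ j, f j ∈ I)
    (hfm : ∀ j, MeasurableSet (f j)) (r : ι → ι → Prop)
    (hr : ∀ i j, i ≠ j → ¬ r i j → P.real (f i ∩ f j) = P.real (f i) * P.real (f j))
    (s : Finset ι) :
    P.real (⋂ j ∈ s, (f j)ᶜ) ≤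
      exp (-∑ i ∈ s, (P.real (f i) - ∑ j ∈ s with j < i ∧ r i j, P.real (f i ∩ f j))) := by
  induction s using Finset.induction_on_max with
  | empty => simp
  | insert a s hlt ih =>
    have ha : a ∉ s := fun h ↦ lt_irrefl a (hlt a h)
    have hstep := hP.measureReal_biInter_insert_compl_le hsup hinf hf hfm a s (r a)
      fun j hj ↦ hr a j (hlt j hj).ne'
    have hfilter_a : {j ∈ insert a s | j < a ∧ r a j} = {j ∈ s | r a j} := by
      ext j
      simp only [mem_filter, mem_insert]
      constructor
      · rintro ⟨rfl | hj, hja, hrj⟩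
        exacts [absurd hja (lt_irrefl j), ⟨hj, hrj⟩]
      · exact fun ⟨hj, hrj⟩ ↦ ⟨Or.inr hj, hlt j hj, hrj⟩
    have hfilter_i : ∀ i ∈ s, {j ∈ insert a s | j < i ∧ r i j} = {j ∈ s | j < i ∧ r i j} :=
      fun i hi ↦ by rw [filter_insert, if_neg fun h ↦ (hlt i hi).not_gt h.1]
    have hsum : ∑ i ∈ s, (P.real (f i) - ∑ j ∈ insert a s with j < i ∧ r i j, P.real (f i ∩ f j))
        = ∑ i ∈ s, (P.real (f i) - ∑ j ∈ s with j < i ∧ r i j, P.real (f i ∩ f j)) :=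
      sum_congr rfl fun i hi ↦ by rw [hfilter_i i hi]
    rw [sum_insert ha, hfilter_a, hsum, neg_add, exp_add, mul_comm]
    exact hstep.trans (by gcongr)

end IsPosCorrelated

end

/-- Janson's inequality `Pr(X = 0) ≤ exp(−μ + Δ/2)` for events in a family closed
under intersections and unions in which any two events are positively correlated. -/
theorem janson_inequality_general_upsets
    {Ω : Type*} [MeasurableSpace Ω] (P : Measure Ω) [IsProbabilityMeasure P]
    (I : Set (Set Ω))
    (hcorr : ∀ A ∈ I, ∀ B ∈ I, P (A ∩ B) ≥ P A * P B)
    (hinter : ∀ A ∈ I, ∀ B ∈ I, A ∩ B ∈ I)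
    (hunion : ∀ A ∈ I, ∀ B ∈ I, A ∪ B ∈ I)
    (k : ℕ) (A : Fin k → Set Ω) (hA : ∀ i, A i ∈ I)
    (hAmeas : ∀ i, MeasurableSet (A i))
    (sim : Fin k → Fin k → Prop)
    (hsim : ∀ i j, sim i j ↔ i ≠ j ∧ P (A i ∩ A j) ≠ P (A i) * P (A j))
    (μ Δ : ℝ)
    (hμ : μ = ∑ i : Fin k, (P (A i)).toReal)
    (hΔ : Δ = ∑ i : Fin k, ∑ j ∈ Finset.univ.filter (fun j => sim i j),
        (P (A i ∩ A j)).toReal) :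
    (P (⋂ i, (A i)ᶜ)).toReal ≤ Real.exp (-μ + Δ / 2) := by
  simp only [← measureReal_def] at hμ hΔ ⊢
  have hP : IsPosCorrelated P I := fun A hA B hB ↦ by
    simpa only [measureReal_def, ENNReal.toReal_mul] using
      ENNReal.toReal_mono (measure_ne_top P _) (hcorr A hA B hB)
  have hindep : ∀ i j, i ≠ j → ¬ sim i j → P.real (A i ∩ A j) = P.real (A i) * P.real (A j) :=
    fun i j hij hnsim ↦ by
      have := not_not.1 (not_and.1 ((hsim i j).not.1 hnsim) hij)
      rw [measureReal_def, this, ENNReal.toReal_mul, measureReal_def, measureReal_def]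
  have hsymm : ∀ i j, sim i j ↔ sim j i := fun i j ↦ by
    rw [hsim, hsim, ne_comm, Set.inter_comm, mul_comm]
  have hbound := hP.measureReal_biInter_compl_le_exp (fun _ hA _ hB ↦ hunion _ hA _ hB)
    (fun _ hA _ hB ↦ hinter _ hA _ hB) hA hAmeas sim hindep univ
  have hΔ' : Δ = 2 * ∑ i, ∑ j ∈ univ with j < i ∧ sim i j, P.real (A i ∩ A j) := by
    have := sum_sum_eq_two_mul_sum_sum_lt univ
      (fun i j ↦ if sim i j then P.real (A i ∩ A j) else 0)
      (fun i j ↦ by simp only [hsymm i j, Set.inter_comm]) (fun i ↦ by simp [hsim])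
    rw [hΔ]
    simpa only [← sum_filter, filter_filter, nsmul_eq_mul, Nat.cast_ofNat] using this
  convert hbound using 2
  · simp
  · rw [sum_sub_distrib, hμ, hΔ']
    ring
end

section
/- Let A_1, ..., A_k be events in a family I closed under intersections and unions in which any two events are positively correlated. Fix i, let Y_i = 1_{A_i} + Σ_{j~i} 1_{A_j} and Z_i = Σ_{j≠i, j≁i} 1_{A_j}, and X = Y_i + Z_i. Then for every s ≥ 0, E[1_{A_i} e^{−sX}] ≥ E[1_{A_i} e^{−sY_i}] · E[e^{−sX}]. -/
/-!
For a count `N = ∑_{j ∈ S} 1_{A_j}`, the layer-cake identity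
`e^{-sN} = 1 - ∑_{t < |S|} (e^{-st} - e^{-s(t+1)}) 1_{N > t}` writes `e^{-sN}` as one minus a
nonnegative combination of the events `{N > t}`, which are built from the `A_j` by `∪` and `∩`
and so lie in `I`. The events of `I` independent of `A_i` are again closed under `∪` and `∩`:
for such `B, C`, positive correlation of `A_i` with `B ∪ C` and with `B ∩ C` gives two
inequalities whose sum is an equality. So every layer of `Z` is independent of `A_i` and
positively correlated with `A_i ∩ L` for every layer `L` of `W = Y - 1_{A_i}`; expanding the
products gives `E[1_{A_i} e^{-sW} e^{-sZ}] ≥ E[1_{A_i} e^{-sW}] E[e^{-sZ}]`. On `A_i` the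
factor `e^{-s 1_{A_i}}` is the constant `e^{-s}`, and `e^{-sZ} ≥ e^{-sX}`.
-/

open MeasureTheory Finset Real
open scoped Classical

namespace Janson

variable {Ω ι : Type*}

def atLeast (A : ι → Set Ω) (S : Finset ι) (t : ℕ) : Set Ω :=
  {ω | t ≤ #{j ∈ S | ω ∈ A j}}

lemma atLeast_zero (A : ι → Set Ω) (S : Finset ι) : atLeast A S 0 = Set.univ := by
  simp [atLeast]

lemma atLeast_eq_empty (A : ι → Set Ω) {S : Finset ι} {t : ℕ} (ht : #S < t) :
    atLeast A S t = ∅ :=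
  Set.eq_empty_of_forall_notMem fun _ hω => (ht.trans_le hω).not_ge (card_filter_le _ _)

lemma atLeast_insert (A : ι → Set Ω) {a : ι} {S : Finset ι} (ha : a ∉ S) (t : ℕ) :
    atLeast A (insert a S) (t + 1) = atLeast A S (t + 1) ∪ (A a ∩ atLeast A S t) := by
  ext ω
  by_cases hω : ω ∈ A a
  · have : a ∉ {j ∈ S | ω ∈ A j} := by simp [ha]
    simp [atLeast, filter_insert, hω, card_insert_of_notMem this]
    omega
  · simp [atLeast, filter_insert, hω]

lemma atLeast_mem {Q : Set (Set Ω)} (hsup : SupClosed Q) (hinf : InfClosed Q)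
    {A : ι → Set Ω} {S : Finset ι} (hA : ∀ j ∈ S, A j ∈ Q) {t : ℕ} (ht : t < #S) :
    atLeast A S (t + 1) ∈ Q := by
  induction S using Finset.induction_on generalizing t with
  | empty => simp at ht
  | insert a S haS ih =>
    have hS : ∀ j ∈ S, A j ∈ Q := fun j hj => hA j (mem_insert_of_mem hj)
    have ha : A a ∈ Q := hA a (mem_insert_self a S)
    rw [card_insert_of_notMem haS] at ht
    rw [atLeast_insert A haS]
    rcases t with _ | t
    · rw [atLeast_zero, Set.inter_univ]
      rcases S.eq_empty_or_nonempty with rfl | hne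
      · rwa [atLeast_eq_empty A (by simp), Set.empty_union]
      · exact hsup (ih hS hne.card_pos) ha
    · have hlow := hinf ha (ih hS (by omega : t < #S))
      rcases Nat.lt_or_ge (t + 1) #S with hlt | hge
      · exact hsup (ih hS hlt) hlow
      · rwa [atLeast_eq_empty A (by omega), Set.empty_union]

lemma sub_sum_range_ite_lt (f : ℕ → ℝ) {n m : ℕ} (h : n ≤ m) :
    f n = f 0 - ∑ t ∈ range m, if t < n then f t - f (t + 1) else 0 := by
  rw [← sum_filter, show {t ∈ range m | t < n} = range n by ext; simp; omega, sum_range_sub']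
  ring

noncomputable def oneSubSumIndicator (T : Finset ι) (w : ι → ℝ) (C : ι → Set Ω) (ω : Ω) :
    ℝ :=
  1 - ∑ t ∈ T, w t * (C t).indicator 1 ω

lemma exp_neg_mul_card_filter (s : ℝ) (A : ι → Set Ω) (S : Finset ι) (ω : Ω) :
    exp (-s * #{j ∈ S | ω ∈ A j}) = oneSubSumIndicator (range #S)
      (fun t => exp (-s * t) - exp (-s * (t + 1))) (fun t => atLeast A S (t + 1)) ω := by
  rw [sub_sum_range_ite_lt (fun n : ℕ => exp (-s * n)) (card_filter_le S _)]
  simp only [oneSubSumIndicator, Nat.cast_zero, mul_zero, exp_zero, Nat.cast_add, Nat.cast_one]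
  congr 1
  refine sum_congr rfl fun t _ => ?_
  by_cases ht : t < #{j ∈ S | ω ∈ A j} <;> simp [ht, atLeast]

section Integral

lemma indicator_one_mul_apply (E : Set Ω) (f : Ω → ℝ) (ω : Ω) :
    E.indicator 1 ω * f ω = E.indicator f ω := by
  by_cases h : ω ∈ E <;> simp [h]

lemma indicator_one_mul_exp_neg_mul_indicator_add (E : Set Ω) (s x : ℝ) (ω : Ω) :
    E.indicator 1 ω * exp (-s * (E.indicator 1 ω + x))
      = exp (-s) * (E.indicator 1 ω * exp (-s * x)) := by
  by_cases h : ω ∈ E <;> simp [h, mul_add, exp_add]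

variable [MeasurableSpace Ω]

lemma integrable_indicator_one {μ : Measure Ω} [IsFiniteMeasure μ] {E : Set Ω}
    (hE : MeasurableSet E) : Integrable (E.indicator (1 : Ω → ℝ)) μ :=
  (integrable_const 1).indicator hE

lemma integrable_oneSubSumIndicator {μ : Measure Ω} [IsFiniteMeasure μ] {T : Finset ι}
    (w : ι → ℝ) {C : ι → Set Ω} (hC : ∀ t ∈ T, MeasurableSet (C t)) :
    Integrable (oneSubSumIndicator T w C) μ :=
  (integrable_const 1).sub <| integrable_finsetSum _ fun t ht =>
    (integrable_indicator_one (hC t ht)).const_mul (w t)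

lemma integral_mul_oneSubSumIndicator {μ : Measure Ω} {φ : Ω → ℝ} (hφ : Integrable φ μ)
    {T : Finset ι} (w : ι → ℝ) {C : ι → Set Ω} (hC : ∀ t ∈ T, MeasurableSet (C t)) :
    ∫ ω, φ ω * oneSubSumIndicator T w C ω ∂μ
      = ∫ ω, φ ω ∂μ - ∑ t ∈ T, w t * ∫ ω in C t, φ ω ∂μ := by
  have hpt : ∀ ω, φ ω * oneSubSumIndicator T w C ω
      = φ ω - ∑ t ∈ T, w t * (C t).indicator φ ω := fun ω => by
    simp only [oneSubSumIndicator, mul_sub, mul_one, mul_sum]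
    congr 1
    refine sum_congr rfl fun t _ => ?_
    rw [← indicator_one_mul_apply (C t) φ]
    ring
  have hint : ∀ t ∈ T, Integrable (fun ω => w t * (C t).indicator φ ω) μ :=
    fun t ht => (hφ.indicator (hC t ht)).const_mul (w t)
  simp only [hpt]
  rw [integral_sub hφ (integrable_finsetSum _ hint), integral_finsetSum _ hint]
  congr 1
  refine sum_congr rfl fun t ht => ?_
  rw [integral_const_mul, integral_indicator (hC t ht)]

lemma integral_indicator_mul_oneSubSumIndicator {μ : Measure Ω} [IsFiniteMeasure μ]
    {E : Set Ω} (hE : MeasurableSet E) {T : Finset ι} (w : ι → ℝ) {C : ι → Set Ω}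
    (hC : ∀ t ∈ T, MeasurableSet (C t)) :
    ∫ ω, E.indicator 1 ω * oneSubSumIndicator T w C ω ∂μ
      = μ.real E - ∑ t ∈ T, w t * μ.real (E ∩ C t) := by
  rw [integral_mul_oneSubSumIndicator (integrable_indicator_one hE) w hC,
    integral_indicator_one hE]
  congr 1
  refine sum_congr rfl fun t _ => ?_
  rw [integral_indicator_one hE, measureReal_restrict_apply hE]

variable {P : Measure Ω} [IsProbabilityMeasure P]

theorem integral_indicator_mul_oneSubSumIndicator_mul_integral_le {a : Set Ω}
    (ha : MeasurableSet a) {T U : Finset ι} {α β : ι → ℝ} (hα : ∀ t ∈ T, 0 ≤ α t) (hβ : ∀ u ∈ U, 0 ≤ β u)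
    {C D : ι → Set Ω} (hC : ∀ t ∈ T, MeasurableSet (C t)) (hD : ∀ u ∈ U, MeasurableSet (D u))
    (hindep : ∀ u ∈ U, P.real (a ∩ D u) = P.real a * P.real (D u))
    (hcorr : ∀ t ∈ T, ∀ u ∈ U, P.real (a ∩ C t) * P.real (D u) ≤ P.real (a ∩ C t ∩ D u)) :
    (∫ ω, a.indicator 1 ω * oneSubSumIndicator T α C ω ∂P)
        * ∫ ω, oneSubSumIndicator U β D ω ∂P
      ≤ ∫ ω, a.indicator 1 ω * oneSubSumIndicator T α C ω
          * oneSubSumIndicator U β D ω ∂P := by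
  have hint : Integrable (fun ω => a.indicator 1 ω * oneSubSumIndicator T α C ω) P := by
    simpa only [indicator_one_mul_apply] using (integrable_oneSubSumIndicator α hC).indicator ha
  have hg := integral_indicator_mul_oneSubSumIndicator (μ := P) MeasurableSet.univ β hD
  simp only [Set.indicator_univ, Pi.one_apply, one_mul, Set.univ_inter, probReal_univ] at hg
  rw [integral_mul_oneSubSumIndicator hint β hD, hg,
    integral_indicator_mul_oneSubSumIndicator ha α hC, mul_sub, mul_one, mul_sum, sub_le_sub_iff_left]
  refine sum_le_sum fun u hu => ?_
  rw [integral_indicator_mul_oneSubSumIndicator ha α hC, measureReal_restrict_apply ha,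
    hindep u hu, mul_left_comm]
  simp only [measureReal_restrict_apply' (hD u hu)]
  refine mul_le_mul_of_nonneg_left ?_ (hβ u hu)
  rw [sub_mul, sum_mul]
  refine sub_le_sub_left (sum_le_sum fun t ht => ?_) _
  rw [mul_assoc]
  exact mul_le_mul_of_nonneg_left (hcorr t ht u hu) (hα t ht)

end Integral

section Lattice

variable [MeasurableSpace Ω]

lemma measurableSet_atLeast {A : ι → Set Ω} {S : Finset ι}
    (hA : ∀ j ∈ S, MeasurableSet (A j)) {t : ℕ} (ht : t < #S) :
    MeasurableSet (atLeast A S (t + 1)) :=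
  atLeast_mem (Q := {B | MeasurableSet B}) (fun _ hB _ hC => hB.union hC)
    (fun _ hB _ hC => hB.inter hC) hA ht

lemma integrable_exp_neg_mul_card_filter {μ : Measure Ω} [IsFiniteMeasure μ] (s : ℝ)
    {A : ι → Set Ω} {S : Finset ι} (hA : ∀ j ∈ S, MeasurableSet (A j)) :
    Integrable (fun ω => exp (-s * #{j ∈ S | ω ∈ A j})) μ := by
  simp only [exp_neg_mul_card_filter]
  exact integrable_oneSubSumIndicator _ fun t ht => measurableSet_atLeast hA (mem_range.1 ht)

lemma measureReal_inter_union_and_inter_inter_eq_mul {μ : Measure Ω} [IsFiniteMeasure μ]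
    {a B C : Set Ω} (ha : MeasurableSet a) (hC : MeasurableSet C)
    (hBa : μ.real (a ∩ B) = μ.real a * μ.real B) (hCa : μ.real (a ∩ C) = μ.real a * μ.real C)
    (hsup : μ.real a * μ.real (B ∪ C) ≤ μ.real (a ∩ (B ∪ C)))
    (hinf : μ.real a * μ.real (B ∩ C) ≤ μ.real (a ∩ (B ∩ C))) :
    μ.real (a ∩ (B ∪ C)) = μ.real a * μ.real (B ∪ C)
      ∧ μ.real (a ∩ (B ∩ C)) = μ.real a * μ.real (B ∩ C) := by
  have hsum : μ.real (a ∩ (B ∪ C)) + μ.real (a ∩ (B ∩ C))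
      = μ.real a * μ.real (B ∪ C) + μ.real a * μ.real (B ∩ C) := by
    rw [Set.inter_union_distrib_left, Set.inter_inter_distrib_left,
      measureReal_union_add_inter (s := a ∩ B) (ha.inter hC), hBa, hCa, ← mul_add, ← mul_add,
      measureReal_union_add_inter hC]
  constructor <;> linarith

structure IsCorrelatedLattice (P : Measure Ω) (J : Set (Set Ω)) : Prop where
  measurableSet : ∀ B ∈ J, MeasurableSet B
  supClosed : SupClosed J
  infClosed : InfClosed J
  mul_le_measureReal_inter : ∀ B ∈ J, ∀ C ∈ J, P.real B * P.real C ≤ P.real (B ∩ C)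

lemma isCorrelatedLattice_sep_measurableSet {P : Measure Ω} [IsFiniteMeasure P]
    {I : Set (Set Ω)} (hcorr : ∀ A ∈ I, ∀ B ∈ I, P (A ∩ B) ≥ P A * P B)
    (hinter : ∀ A ∈ I, ∀ B ∈ I, A ∩ B ∈ I) (hunion : ∀ A ∈ I, ∀ B ∈ I, A ∪ B ∈ I) :
    IsCorrelatedLattice P {B ∈ I | MeasurableSet B} where
  measurableSet _ hB := hB.2
  supClosed _ hB _ hC := ⟨hunion _ hB.1 _ hC.1, hB.2.union hC.2⟩
  infClosed _ hB _ hC := ⟨hinter _ hB.1 _ hC.1, hB.2.inter hC.2⟩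
  mul_le_measureReal_inter B hB C hC := by
    rw [measureReal_def, measureReal_def, ← ENNReal.toReal_mul]
    exact ENNReal.toReal_mono (measure_ne_top P _) (hcorr B hB.1 C hC.1)

variable {P : Measure Ω} {J : Set (Set Ω)}

lemma IsCorrelatedLattice.sep_indep [IsFiniteMeasure P] (hJ : IsCorrelatedLattice P J) {a : Set Ω} (ha : a ∈ J) :
    IsCorrelatedLattice P {B ∈ J | P.real (a ∩ B) = P.real a * P.real B} := by
  have hsup_inf {B C : Set Ω} (hB : B ∈ J) (hC : C ∈ J)
      (hBa : P.real (a ∩ B) = P.real a * P.real B)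
      (hCa : P.real (a ∩ C) = P.real a * P.real C) :=
    measureReal_inter_union_and_inter_inter_eq_mul (hJ.measurableSet a ha)
      (hJ.measurableSet C hC) hBa hCa (hJ.mul_le_measureReal_inter a ha _ (hJ.supClosed hB hC))
      (hJ.mul_le_measureReal_inter a ha _ (hJ.infClosed hB hC))
  exact
    { measurableSet := fun B hB => hJ.measurableSet B hB.1
      supClosed := fun _ hB _ hC =>
        ⟨hJ.supClosed hB.1 hC.1, (hsup_inf hB.1 hC.1 hB.2 hC.2).1⟩
      infClosed := fun _ hB _ hC =>
        ⟨hJ.infClosed hB.1 hC.1, (hsup_inf hB.1 hC.1 hB.2 hC.2).2⟩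
      mul_le_measureReal_inter := fun B hB C hC =>
        hJ.mul_le_measureReal_inter B hB.1 C hC.1 }

variable [IsProbabilityMeasure P]

theorem IsCorrelatedLattice.integral_indicator_mul_exp_mul_integral_exp_le
    (hJ : IsCorrelatedLattice P J) {a : Set Ω} (ha : a ∈ J) {A : ι → Set Ω} {T U : Finset ι}
    (hT : ∀ j ∈ T, A j ∈ J)
    (hU : ∀ j ∈ U, A j ∈ J ∧ P.real (a ∩ A j) = P.real a * P.real (A j)) {s : ℝ} (hs : 0 ≤ s) :
    (∫ ω, a.indicator 1 ω * exp (-s * #{j ∈ T | ω ∈ A j}) ∂P)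
        * ∫ ω, exp (-s * #{j ∈ U | ω ∈ A j}) ∂P
      ≤ ∫ ω, a.indicator 1 ω * exp (-s * #{j ∈ T | ω ∈ A j})
          * exp (-s * #{j ∈ U | ω ∈ A j}) ∂P := by
  have hJa := hJ.sep_indep ha
  have hw (t : ℕ) : 0 ≤ exp (-s * t) - exp (-s * (t + 1)) :=
    sub_nonneg.2 (exp_le_exp.2 (by nlinarith))
  have hC : ∀ t ∈ range #T, atLeast A T (t + 1) ∈ J :=
    fun t ht => atLeast_mem hJ.supClosed hJ.infClosed hT (mem_range.1 ht)
  have hD : ∀ u ∈ range #U,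
      atLeast A U (u + 1) ∈ {B ∈ J | P.real (a ∩ B) = P.real a * P.real B} :=
    fun u hu => atLeast_mem hJa.supClosed hJa.infClosed hU (mem_range.1 hu)
  simp only [exp_neg_mul_card_filter]
  exact integral_indicator_mul_oneSubSumIndicator_mul_integral_le (hJ.measurableSet a ha)
    (fun t _ => hw t) (fun u _ => hw u) (fun t ht => hJ.measurableSet _ (hC t ht))
    (fun u hu => hJ.measurableSet _ (hD u hu).1) (fun u hu => (hD u hu).2)
    (fun t ht u hu => hJ.mul_le_measureReal_inter _ (hJ.infClosed ha (hC t ht)) _ (hD u hu).1)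

theorem IsCorrelatedLattice.integral_indicator_mul_exp_add_mul_integral_exp_add_le
    (hJ : IsCorrelatedLattice P J) {a : Set Ω} (ha : a ∈ J) {A : ι → Set Ω} {T U : Finset ι}
    (hT : ∀ j ∈ T, A j ∈ J)
    (hU : ∀ j ∈ U, A j ∈ J ∧ P.real (a ∩ A j) = P.real a * P.real (A j)) {s : ℝ} (hs : 0 ≤ s) :
    (∫ ω, a.indicator 1 ω * exp (-s * (a.indicator 1 ω + #{j ∈ T | ω ∈ A j})) ∂P)
        * ∫ ω, exp (-s * (a.indicator 1 ω + #{j ∈ T | ω ∈ A j} + #{j ∈ U | ω ∈ A j})) ∂P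
      ≤ ∫ ω, a.indicator 1 ω
          * exp (-s * (a.indicator 1 ω + #{j ∈ T | ω ∈ A j} + #{j ∈ U | ω ∈ A j})) ∂P := by
  have hle : ∀ ω, exp (-s * (a.indicator 1 ω + #{j ∈ T | ω ∈ A j} + #{j ∈ U | ω ∈ A j}))
      ≤ exp (-s * #{j ∈ U | ω ∈ A j}) := fun ω =>
    exp_le_exp.2 (mul_le_mul_of_nonpos_left (le_add_of_nonneg_left (add_nonneg
      (Set.indicator_nonneg (fun _ _ => zero_le_one) ω) (Nat.cast_nonneg _))) (neg_nonpos.2 hs))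
  calc _ ≤ (∫ ω, a.indicator 1 ω * exp (-s * (a.indicator 1 ω + #{j ∈ T | ω ∈ A j})) ∂P)
          * ∫ ω, exp (-s * #{j ∈ U | ω ∈ A j}) ∂P := by
        refine mul_le_mul_of_nonneg_left (integral_mono_of_nonneg
          (ae_of_all _ fun ω => (exp_pos _).le) ?_ (ae_of_all _ hle)) ?_
        · exact integrable_exp_neg_mul_card_filter s fun j hj =>
            hJ.measurableSet _ (hU j hj).1
        · exact integral_nonneg fun ω => mul_nonneg
            (Set.indicator_nonneg (fun _ _ => zero_le_one) ω) (exp_pos _).le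
    _ = exp (-s) * ((∫ ω, a.indicator 1 ω * exp (-s * #{j ∈ T | ω ∈ A j}) ∂P)
          * ∫ ω, exp (-s * #{j ∈ U | ω ∈ A j}) ∂P) := by
        simp only [indicator_one_mul_exp_neg_mul_indicator_add, integral_const_mul, mul_assoc]
    _ ≤ exp (-s) * ∫ ω, a.indicator 1 ω * exp (-s * #{j ∈ T | ω ∈ A j})
          * exp (-s * #{j ∈ U | ω ∈ A j}) ∂P := by
        gcongr
        exact hJ.integral_indicator_mul_exp_mul_integral_exp_le ha hT hU hs
    _ = _ := by
        rw [← integral_const_mul]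
        congr 1 with ω
        rw [add_assoc, indicator_one_mul_exp_neg_mul_indicator_add, mul_add, exp_add]
        ring

end Lattice

end Janson

open Janson

/-- The key correlation inequality in the proof of the lower-tail Janson inequality:
`E[1_{A_i} e^{−sX}] ≥ E[1_{A_i} e^{−sY_i}] · E[e^{−sX}]` for `s ≥ 0`. -/
theorem janson_key_correlation_general_upsets
    {Ω : Type*} [MeasurableSpace Ω] (P : Measure Ω) [IsProbabilityMeasure P]
    (I : Set (Set Ω))
    (hcorr : ∀ A ∈ I, ∀ B ∈ I, P (A ∩ B) ≥ P A * P B)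
    (hinter : ∀ A ∈ I, ∀ B ∈ I, A ∩ B ∈ I)
    (hunion : ∀ A ∈ I, ∀ B ∈ I, A ∪ B ∈ I)
    (k : ℕ) (A : Fin k → Set Ω) (hA : ∀ i, A i ∈ I)
    (hAmeas : ∀ i, MeasurableSet (A i))
    (sim : Fin k → Fin k → Prop)
    (hsim : ∀ i j, sim i j ↔ i ≠ j ∧ P (A i ∩ A j) ≠ P (A i) * P (A j))
    (i : Fin k)
    (X Y Z : Ω → ℝ)
    (hY : ∀ ω, Y ω = (if ω ∈ A i then (1 : ℝ) else 0)
        + ∑ j ∈ Finset.univ.filter (fun j => sim i j), (if ω ∈ A j then (1 : ℝ) else 0))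
    (hZ : ∀ ω, Z ω = ∑ j ∈ Finset.univ.filter (fun j => j ≠ i ∧ ¬ sim i j),
        (if ω ∈ A j then (1 : ℝ) else 0))
    (hXYZ : ∀ ω, X ω = Y ω + Z ω) :
    ∀ s : ℝ, 0 ≤ s →
      (∫ ω, (if ω ∈ A i then (1 : ℝ) else 0) * Real.exp (-s * X ω) ∂P)
        ≥ (∫ ω, (if ω ∈ A i then (1 : ℝ) else 0) * Real.exp (-s * Y ω) ∂P)
          * (∫ ω, Real.exp (-s * X ω) ∂P) := by
  intro s hs
  have hindep : ∀ j ∈ univ.filter (fun j => j ≠ i ∧ ¬ sim i j),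
      A j ∈ {B ∈ I | MeasurableSet B} ∧ P.real (A i ∩ A j) = P.real (A i) * P.real (A j) := by
    intro j hj
    obtain ⟨hji, hnsim⟩ := (mem_filter.1 hj).2
    have hP : P (A i ∩ A j) = P (A i) * P (A j) :=
      not_not.1 fun h => hnsim ((hsim i j).2 ⟨hji.symm, h⟩)
    exact ⟨⟨hA j, hAmeas j⟩, by simp only [measureReal_def, hP, ENNReal.toReal_mul]⟩
  have key := (isCorrelatedLattice_sep_measurableSet hcorr hinter hunion
    ).integral_indicator_mul_exp_add_mul_integral_exp_add_le (T := univ.filter (sim i ·))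
    ⟨hA i, hAmeas i⟩ (fun j _ => ⟨hA j, hAmeas j⟩) hindep hs
  simpa only [Set.indicator_apply, Pi.one_apply, hXYZ, hY, hZ, sum_boole] using key
end

section
/- Let A_1, ..., A_k be increasing events in a finite product probability space {0,1}^S and s ≥ 0. For each i the random variables f = 1_{A_i}(1 − e^{−sY_i}) and g = e^{−sZ_i} satisfy E[fg] ≤ E[f]E[g], where Y_i = 1_{A_i} + Σ_{j~i} 1_{A_j} and Z_i = Σ_{j≠i, j≁i} 1_{A_j}. -/
/-!
A product measure `μ` on `S → Bool` satisfies `μ{a} μ{b} = μ{a ⊓ b} μ{a ⊔ b}` (coordinatewise,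
the pair `{a s, b s}` is just reordered), so the FKG inequality applies: increasing
functions are positively correlated, and an increasing and a decreasing one negatively. Here `f` is
increasing, being the product of the nonnegative increasing functions `1_{A_i}` and `1 - e^{-sY_i}`,
while `g = e^{-sZ_i}` is decreasing since `Z_i` is a sum of indicators of increasing events.
-/

open MeasureTheory Finset Real
open scoped Classical

namespace MeasureTheory

variable {Ω : Type*} [MeasurableSpace Ω] [Fintype Ω] [MeasurableSingletonClass Ω]

lemma integral_eq_sum_measureReal_mul (μ : Measure Ω) [IsFiniteMeasure μ] (f : Ω → ℝ) :
    ∫ ω, f ω ∂μ = ∑ ω, μ.real {ω} * f ω :=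
  integral_fintype .of_finite

variable [DistribLattice Ω] (μ : Measure Ω) [IsProbabilityMeasure μ]

theorem integral_mul_integral_le_integral_mul_of_monotone
    (hμ : ∀ a b, μ {a} * μ {b} ≤ μ {a ⊓ b} * μ {a ⊔ b}) {f g : Ω → ℝ}
    (hf : Monotone f) (hg : Monotone g) :
    (∫ ω, f ω ∂μ) * (∫ ω, g ω ∂μ) ≤ ∫ ω, f ω * g ω ∂μ := by
  have : Nonempty Ω := nonempty_of_isProbabilityMeasure μ
  obtain ⟨a, ha⟩ := Finite.exists_min f
  obtain ⟨b, hb⟩ := Finite.exists_min g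
  have hweight : ∀ x y, μ.real {x} * μ.real {y} ≤ μ.real {x ⊓ y} * μ.real {x ⊔ y} := fun x y => by
    simp only [measureReal_def, ← ENNReal.toReal_mul]
    exact ENNReal.toReal_mono (by finiteness) (hμ x y)
  -- Mathlib's `fkg` needs nonnegative functions, so shift `f` and `g` by their minima.
  have key := fkg (μ := fun x => μ.real {x}) (f := fun x => f x - f a) (g := fun x => g x - g b)
    (fun _ => measureReal_nonneg) (fun x => sub_nonneg.2 (ha x)) (fun x => sub_nonneg.2 (hb x))
    (fun x y h => sub_le_sub_right (hf h) _) (fun x y h => sub_le_sub_right (hg h) _) hweight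
  have hsum : ∑ x, μ.real {x} = 1 := by
    simp only [sum_measureReal_singleton, coe_univ, probReal_univ]
  simp only [← integral_eq_sum_measureReal_mul, hsum, one_mul] at key
  have hF : ∫ x, (f x - f a) ∂μ = ∫ x, f x ∂μ - f a := by
    rw [integral_sub .of_finite (integrable_const _), integral_const, probReal_univ, one_smul]
  have hG : ∫ x, (g x - g b) ∂μ = ∫ x, g x ∂μ - g b := by
    rw [integral_sub .of_finite (integrable_const _), integral_const, probReal_univ, one_smul]
  have hFG : ∫ x, (f x - f a) * (g x - g b) ∂μ
      = ∫ x, f x * g x ∂μ - g b * ∫ x, f x ∂μ - f a * ∫ x, g x ∂μ + f a * g b := by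
    simp only [integral_eq_sum_measureReal_mul, Finset.mul_sum]
    rw [← mul_one (f a * g b), ← hsum, Finset.mul_sum, ← sum_sub_distrib, ← sum_sub_distrib,
      ← sum_add_distrib]
    exact sum_congr rfl fun x _ => by ring
  rw [hF, hG, hFG] at key
  nlinarith [key]

theorem integral_mul_le_integral_mul_integral_of_monotone_of_antitone
    (hμ : ∀ a b, μ {a} * μ {b} ≤ μ {a ⊓ b} * μ {a ⊔ b}) {f g : Ω → ℝ}
    (hf : Monotone f) (hg : Antitone g) :
    ∫ ω, f ω * g ω ∂μ ≤ (∫ ω, f ω ∂μ) * (∫ ω, g ω ∂μ) := by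
  have := integral_mul_integral_le_integral_mul_of_monotone μ hμ hf hg.neg
  simp only [mul_neg, integral_neg] at this
  linarith

lemma Measure.pi_singleton_inf_mul_pi_singleton_sup {ι α : Type*} [Fintype ι] [LinearOrder α]
    [MeasurableSpace α] [MeasurableSingletonClass α] (μs : ι → Measure α) [∀ i, SigmaFinite (μs i)]
    (a b : ι → α) :
    Measure.pi μs {a ⊓ b} * Measure.pi μs {a ⊔ b} = Measure.pi μs {a} * Measure.pi μs {b} := by
  simp only [← Set.univ_pi_singleton, Measure.pi_pi, ← prod_mul_distrib]
  refine prod_congr rfl fun i _ => ?_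
  rcases le_total (a i) (b i) with h | h
  · simp [h]
  · simp [h, mul_comm]

end MeasureTheory

lemma IsUpperSet.monotone_ite_one {α : Type*} [Preorder α] {A : Set α} (hA : IsUpperSet A)
    [DecidablePred (· ∈ A)] : Monotone fun x => if x ∈ A then (1 : ℝ) else 0 := by
  intro x y hxy
  by_cases hx : x ∈ A
  · simp [hx, hA hxy hx]
  · simp only [hx, if_false]
    split_ifs <;> norm_num

lemma Monotone.antitone_exp_neg_mul {α : Type*} [Preorder α] {Y : α → ℝ} (hY : Monotone Y)
    {s : ℝ} (hs : 0 ≤ s) : Antitone fun x => exp (-s * Y x) :=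
  fun _ _ h => exp_le_exp.2 (by nlinarith [hY h])

theorem harris_for_janson_factors_general
    {S : Type*} [Fintype S] (μs : S → Measure Bool) [∀ s, IsProbabilityMeasure (μs s)]
    (k : ℕ) (A : Fin k → Set (S → Bool))
    (hAinc : ∀ i, ∀ ω ω' : S → Bool, (∀ s, ω s ≤ ω' s) → ω ∈ A i → ω' ∈ A i)
    (sim : Fin k → Fin k → Prop)
    (i : Fin k) (s : ℝ) (hs : 0 ≤ s)
    (Y Z f g : (S → Bool) → ℝ)
    (hY : ∀ ω, Y ω = (if ω ∈ A i then (1 : ℝ) else 0)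
        + ∑ j ∈ Finset.univ.filter (fun j => sim i j), (if ω ∈ A j then (1 : ℝ) else 0))
    (hZ : ∀ ω, Z ω = ∑ j ∈ Finset.univ.filter (fun j => j ≠ i ∧ ¬ sim i j),
        (if ω ∈ A j then (1 : ℝ) else 0))
    (hf : ∀ ω, f ω = (if ω ∈ A i then (1 : ℝ) else 0) * (1 - Real.exp (-s * Y ω)))
    (hg : ∀ ω, g ω = Real.exp (-s * Z ω)) :
    (∫ ω, f ω * g ω ∂Measure.pi μs)
      ≤ (∫ ω, f ω ∂Measure.pi μs) * (∫ ω, g ω ∂Measure.pi μs) := by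
  have hind : ∀ j, Monotone fun ω => if ω ∈ A j then (1 : ℝ) else 0 :=
    fun j => IsUpperSet.monotone_ite_one fun ω ω' h hω => hAinc j ω ω' h hω
  have hind₀ : ∀ j ω, 0 ≤ if ω ∈ A j then (1 : ℝ) else 0 := fun j ω => by positivity
  have hYmono : Monotone Y := by
    rw [funext hY]
    exact (hind i).add (.finsetSum fun j _ => hind j)
  have hZmono : Monotone Z := by
    rw [funext hZ]
    exact .finsetSum fun j _ => hind j
  have hexpY_le : ∀ ω, exp (-s * Y ω) ≤ 1 := fun ω => by
    have : 0 ≤ Y ω := hY ω ▸ add_nonneg (hind₀ i ω) (sum_nonneg fun j _ => hind₀ j ω)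
    exact exp_le_one_iff.2 (by nlinarith)
  have hfmono : Monotone f := by
    rw [funext hf]
    exact (hind i).mul (fun _ _ h => sub_le_sub_left (hYmono.antitone_exp_neg_mul hs h) 1)
      (hind₀ i) fun ω => sub_nonneg.2 (hexpY_le ω)
  have hganti : Antitone g := by
    rw [funext hg]
    exact hZmono.antitone_exp_neg_mul hs
  exact integral_mul_le_integral_mul_integral_of_monotone_of_antitone _
    (fun a b => (Measure.pi_singleton_inf_mul_pi_singleton_sup μs a b).ge) hfmono hganti

/-- For increasing events in a finite product space, the random variables
`f = 1_{A_i}(1 − e^{−sY_i})` and `g = e^{−sZ_i}` satisfy `E[fg] ≤ E[f]E[g]`. -/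
theorem harris_for_janson_factors
    {S : Type*} [Fintype S] (μs : S → Measure Bool) [∀ s, IsProbabilityMeasure (μs s)]
    (k : ℕ) (A : Fin k → Set (S → Bool))
    (hAinc : ∀ i, ∀ ω ω' : S → Bool, (∀ s, ω s ≤ ω' s) → ω ∈ A i → ω' ∈ A i)
    (hAmeas : ∀ i, MeasurableSet (A i))
    (sim : Fin k → Fin k → Prop)
    (hsim : ∀ i j, sim i j ↔ i ≠ j ∧
      Measure.pi μs (A i ∩ A j) ≠ Measure.pi μs (A i) * Measure.pi μs (A j))
    (i : Fin k) (s : ℝ) (hs : 0 ≤ s)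
    (Y Z f g : (S → Bool) → ℝ)
    (hY : ∀ ω, Y ω = (if ω ∈ A i then (1 : ℝ) else 0)
        + ∑ j ∈ Finset.univ.filter (fun j => sim i j), (if ω ∈ A j then (1 : ℝ) else 0))
    (hZ : ∀ ω, Z ω = ∑ j ∈ Finset.univ.filter (fun j => j ≠ i ∧ ¬ sim i j),
        (if ω ∈ A j then (1 : ℝ) else 0))
    (hf : ∀ ω, f ω = (if ω ∈ A i then (1 : ℝ) else 0) * (1 - Real.exp (-s * Y ω)))
    (hg : ∀ ω, g ω = Real.exp (-s * Z ω)) :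
    (∫ ω, f ω * g ω ∂Measure.pi μs)
      ≤ (∫ ω, f ω ∂Measure.pi μs) * (∫ ω, g ω ∂Measure.pi μs) :=
  harris_for_janson_factors_general μs k A hAinc sim i s hs Y Z f g hY hZ hf hg
end

section
/- Let A_1, ..., A_k be events in a family I closed under intersections and unions in which any two events are positively correlated, with X = Σ_i 1_{A_i} and ε = max_i Pr(A_i) < 1. Then Pr(X = 0) ≤ [∏_{i=1}^k (1 − Pr(A_i))] · exp(Δ/(2(1−ε))), where Δ = Σ_i Σ_{j~i} Pr(A_i ∩ A_j). -/
open MeasureTheory Finset Real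
open scoped Classical

/-!
Order the events and let `C_i = ⋂_{j<i} A_jᶜ`. Split the earlier indices into the neighbours `D`
of `i` and the rest, with union `U`. Adding one non-neighbour at a time, inclusion–exclusion and
the positive correlations inside the lattice show that `A_i`, being independent of each
non-neighbour, is negatively correlated with `U`; and each `A_i ∩ A_j` is positively correlated
with `U`. As `A_i ∩ C_i = (A_i \ U) \ ⋃_{j∈D} A_j`, this gives
`Pr(A_i ∩ C_i) ≥ (Pr A_i - δ_i) Pr C_i` with `δ_i = Σ_{j∈D} Pr(A_i ∩ A_j)`, hence
`Pr C_{i+1} ≤ (1 - Pr A_i + δ_i) Pr C_i ≤ (1 - Pr A_i) exp (δ_i / (1 - ε)) Pr C_i`.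
Multiplying out, `Σ_i δ_i = Δ / 2` since `Δ` counts every dependent pair twice.
-/

theorem Set.biUnion_mem_of_union_mem {α ι : Type*} {I : Set (Set α)}
    (hunion : ∀ B ∈ I, ∀ C ∈ I, B ∪ C ∈ I) {s : Finset ι} (hs : s.Nonempty) {f : ι → Set α}
    (hf : ∀ j ∈ s, f j ∈ I) : ⋃ j ∈ s, f j ∈ I := by
  rw [← Finset.sup_set_eq_biUnion, ← Finset.sup'_eq_sup hs]
  exact Finset.sup'_mem I hunion s hs f hf

theorem one_sub_add_le_mul_exp {p δ ε : ℝ} (hδ : 0 ≤ δ) (hp : p ≤ ε) (hε : ε < 1) :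
    1 - p + δ ≤ (1 - p) * exp (δ / (1 - ε)) := by
  have hδp : δ ≤ (1 - p) * (δ / (1 - ε)) := by
    rw [mul_div_assoc', le_div_iff₀ (by linarith)]
    nlinarith
  calc 1 - p + δ ≤ (1 - p) * (δ / (1 - ε) + 1) := by linarith
    _ ≤ (1 - p) * exp (δ / (1 - ε)) :=
        mul_le_mul_of_nonneg_left (add_one_le_exp _) (by linarith)

theorem Finset.le_prod_filter_lt_of_le_mul_insert {ι : Type*} [LinearOrder ι]
    (g : Finset ι → ℝ) (c : ι → Finset ι → ℝ) (hempty : g ∅ ≤ 1) (hc : ∀ a s, 0 ≤ c a s)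
    (hinsert : ∀ a s, (∀ x ∈ s, x < a) → g (insert a s) ≤ c a s * g s) (s : Finset ι) :
    g s ≤ ∏ i ∈ s, c i (s.filter (· < i)) := by
  induction s using Finset.induction_on_max with
  | empty => simpa using hempty
  | insert a s hlt ih =>
    have ha : a ∉ s := fun h => lt_irrefl a (hlt a h)
    have hprefix : ∀ i ∈ s, (insert a s).filter (· < i) = s.filter (· < i) := fun i hi => by
      rw [Finset.filter_insert, if_neg (not_lt.2 (hlt i hi).le)]
    rw [Finset.prod_insert ha, Finset.filter_insert, if_neg (lt_irrefl a),
      Finset.filter_true_of_mem hlt, Finset.prod_congr rfl fun i hi => by rw [hprefix i hi]]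
    exact (hinsert a s hlt).trans (mul_le_mul_of_nonneg_left ih (hc a s))

theorem Finset.sum_sum_eq_two_nsmul_sum_sum_filter_lt {ι M : Type*} [Fintype ι] [LinearOrder ι]
    [AddCommMonoid M] (g : ι → ι → M) (hg : ∀ i j, g i j = g j i) (hdiag : ∀ i, g i i = 0) :
    ∑ i, ∑ j, g i j = 2 • ∑ i, ∑ j ∈ univ.filter (· < i), g i j := by
  have hsplit : ∀ i j, g i j = (if j < i then g i j else 0) + (if i < j then g i j else 0) := by
    intro i j
    rcases lt_trichotomy i j with h | rfl | h
    · simp [h, h.not_gt]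
    · simp [hdiag]
    · simp [h, h.not_gt]
  have hswap :
      ∑ i, ∑ j, (if i < j then g i j else 0) = ∑ i, ∑ j, (if j < i then g i j else 0) := by
    rw [Finset.sum_comm]
    simp only [hg]
  simp only [Finset.sum_filter]
  calc ∑ i, ∑ j, g i j
      = ∑ i, ∑ j, (if j < i then g i j else 0) + ∑ i, ∑ j, (if i < j then g i j else 0) := by
        simp only [← Finset.sum_add_distrib, ← hsplit]
    _ = 2 • ∑ i, ∑ j, (if j < i then g i j else 0) := by rw [hswap, two_nsmul]

section Correlation

variable {Ω ι : Type*} [MeasurableSpace Ω] {P : Measure Ω} {I : Set (Set Ω)}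
  (hcorr : ∀ B ∈ I, ∀ C ∈ I, P.real B * P.real C ≤ P.real (B ∩ C))
  (hinter : ∀ B ∈ I, ∀ C ∈ I, B ∩ C ∈ I) (hunion : ∀ B ∈ I, ∀ C ∈ I, B ∪ C ∈ I)

include hcorr hunion in
theorem mul_measureReal_biUnion_le {C : Set Ω} (hC : C ∈ I) (s : Finset ι)
    {f : ι → Set Ω} (hf : ∀ j ∈ s, f j ∈ I) :
    P.real C * P.real (⋃ j ∈ s, f j) ≤ P.real (C ∩ ⋃ j ∈ s, f j) := by
  rcases s.eq_empty_or_nonempty with rfl | hs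
  · simp
  · exact hcorr C hC _ (Set.biUnion_mem_of_union_mem hunion hs hf)

include hcorr hinter hunion in
theorem measureReal_inter_biUnion_le_mul [IsFiniteMeasure P]
    {B : Set Ω} (hB : B ∈ I) (hBm : MeasurableSet B) {f : ι → Set Ω} (hf : ∀ j, f j ∈ I)
    (hfm : ∀ j, MeasurableSet (f j)) (s : Finset ι)
    (hneg : ∀ j ∈ s, P.real (B ∩ f j) ≤ P.real B * P.real (f j)) :
    P.real (B ∩ ⋃ j ∈ s, f j) ≤ P.real B * P.real (⋃ j ∈ s, f j) := by
  induction s using Finset.induction_on with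
  | empty => simp
  | insert a s _ ih =>
    set U := ⋃ j ∈ s, f j
    have hU : MeasurableSet U := Finset.measurableSet_biUnion s fun j _ => hfm j
    have hincl_excl_B : P.real (B ∩ (f a ∪ U)) + P.real (B ∩ (f a ∩ U))
        = P.real (B ∩ f a) + P.real (B ∩ U) := by
      rw [Set.inter_union_distrib_left, Set.inter_inter_distrib_left]
      exact measureReal_union_add_inter (hBm.inter hU) (measure_ne_top _ _) (measure_ne_top _ _)
    have hincl_excl : P.real (f a ∪ U) + P.real (f a ∩ U) = P.real (f a) + P.real U :=
      measureReal_union_add_inter hU (measure_ne_top _ _) (measure_ne_top _ _)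
    have hcorr_aU : P.real B * P.real (f a ∩ U) ≤ P.real (B ∩ (f a ∩ U)) := by
      rw [show f a ∩ U = ⋃ j ∈ s, f a ∩ f j from Set.inter_iUnion₂ _ _]
      exact mul_measureReal_biUnion_le hcorr hunion hB s fun j _ => hinter _ (hf a) _ (hf j)
    rw [Finset.set_biUnion_insert]
    linear_combination hincl_excl_B - P.real B * hincl_excl + hcorr_aU
      + hneg a (s.mem_insert_self a) + ih fun j hj => hneg j (Finset.mem_insert_of_mem hj)

variable [IsProbabilityMeasure P] {B U : Set Ω}

theorem mul_measureReal_compl_le_sdiff (hU : MeasurableSet U)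
    (h : P.real (B ∩ U) ≤ P.real B * P.real U) : P.real B * P.real Uᶜ ≤ P.real (B \ U) := by
  rw [probReal_compl_eq_one_sub hU]
  linarith [measureReal_inter_add_sdiff (μ := P) (s := B) hU]

theorem measureReal_sdiff_le_mul_compl (hU : MeasurableSet U)
    (h : P.real B * P.real U ≤ P.real (B ∩ U)) : P.real (B \ U) ≤ P.real B * P.real Uᶜ := by
  rw [probReal_compl_eq_one_sub hU]
  linarith [measureReal_inter_add_sdiff (μ := P) (s := B) hU]

include hcorr hinter hunion in
theorem measureReal_sdiff_inter_biUnion_le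
    (hB : B ∈ I) {f : ι → Set Ω} (hf : ∀ j, f j ∈ I) (hfm : ∀ j, MeasurableSet (f j))
    (s t : Finset ι) :
    P.real ((B \ ⋃ j ∈ s, f j) ∩ ⋃ j ∈ t, f j)
      ≤ (∑ j ∈ t, P.real (B ∩ f j)) * P.real (⋃ j ∈ s, f j)ᶜ := by
  set U := ⋃ j ∈ s, f j
  have hU : MeasurableSet U := Finset.measurableSet_biUnion s fun j _ => hfm j
  have hsub : (B \ U) ∩ ⋃ j ∈ t, f j ⊆ ⋃ j ∈ t, (B ∩ f j) \ U := by
    rintro ω ⟨⟨hωB, hωU⟩, hωt⟩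
    simp only [Set.mem_iUnion] at hωt ⊢
    obtain ⟨j, hj, hωj⟩ := hωt
    exact ⟨j, hj, ⟨hωB, hωj⟩, hωU⟩
  calc P.real ((B \ U) ∩ ⋃ j ∈ t, f j)
      ≤ ∑ j ∈ t, P.real ((B ∩ f j) \ U) :=
        (measureReal_mono hsub (measure_ne_top _ _)).trans (measureReal_biUnion_finset_le t _)
    _ ≤ ∑ j ∈ t, P.real (B ∩ f j) * P.real Uᶜ := by
        refine Finset.sum_le_sum fun j _ => measureReal_sdiff_le_mul_compl hU ?_
        exact mul_measureReal_biUnion_le hcorr hunion (hinter _ hB _ (hf j)) s fun j _ => hf j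
    _ = (∑ j ∈ t, P.real (B ∩ f j)) * P.real Uᶜ := (Finset.sum_mul ..).symm

include hcorr hinter hunion in
theorem sub_sum_mul_measureReal_biInter_compl_le
    (hB : B ∈ I) (hBm : MeasurableSet B) {f : ι → Set Ω} (hf : ∀ j, f j ∈ I)
    (hfm : ∀ j, MeasurableSet (f j)) (s : Finset ι) (dep : ι → Prop)
    (hneg : ∀ j ∈ s, ¬ dep j → P.real (B ∩ f j) ≤ P.real B * P.real (f j)) :
    (P.real B - ∑ j ∈ s.filter dep, P.real (B ∩ f j)) * P.real (⋂ j ∈ s, (f j)ᶜ)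
      ≤ P.real (B ∩ ⋂ j ∈ s, (f j)ᶜ) := by
  set δ := ∑ j ∈ s.filter dep, P.real (B ∩ f j)
  set U := ⋃ j ∈ s.filter (¬ dep ·), f j
  set V := ⋃ j ∈ s.filter dep, f j
  have hU : MeasurableSet U := Finset.measurableSet_biUnion _ fun j _ => hfm j
  have hV : MeasurableSet V := Finset.measurableSet_biUnion _ fun j _ => hfm j
  rcases le_or_gt (P.real B) δ with hδ | hδ
  · exact (mul_nonpos_of_nonpos_of_nonneg (by linarith) measureReal_nonneg).trans
      measureReal_nonneg
  rw [← sub_pos] at hδ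
  have hsplit : B ∩ ⋂ j ∈ s, (f j)ᶜ = (B \ U) \ V := by
    ext ω
    simp only [U, V, Set.mem_inter_iff, Set.mem_iInter, Set.mem_sdiff, Set.mem_iUnion,
      Finset.mem_filter, Set.mem_compl_iff]
    constructor
    · rintro ⟨hωB, hω⟩
      exact ⟨⟨hωB, fun ⟨j, ⟨hj, _⟩, hωj⟩ => hω j hj hωj⟩, fun ⟨j, ⟨hj, _⟩, hωj⟩ => hω j hj hωj⟩
    · rintro ⟨⟨hωB, hωU⟩, hωV⟩
      refine ⟨hωB, fun j hj hωj => ?_⟩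
      by_cases hdep : dep j
      exacts [hωV ⟨j, ⟨hj, hdep⟩, hωj⟩, hωU ⟨j, ⟨hj, hdep⟩, hωj⟩]
  have hsubU : ⋂ j ∈ s, (f j)ᶜ ⊆ Uᶜ := by
    simp only [U, Set.compl_iUnion]
    exact Set.biInter_mono (Finset.filter_subset _ s) fun _ _ => le_rfl
  have hindep : P.real B * P.real Uᶜ ≤ P.real (B \ U) :=
    mul_measureReal_compl_le_sdiff hU <| measureReal_inter_biUnion_le_mul hcorr hinter hunion
      hB hBm hf hfm _ fun j hj => hneg j (Finset.mem_filter.1 hj).1 (Finset.mem_filter.1 hj).2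
  have hdep : P.real ((B \ U) ∩ V) ≤ δ * P.real Uᶜ :=
    measureReal_sdiff_inter_biUnion_le hcorr hinter hunion hB hf hfm _ _
  calc (P.real B - δ) * P.real (⋂ j ∈ s, (f j)ᶜ) ≤ (P.real B - δ) * P.real Uᶜ :=
        mul_le_mul_of_nonneg_left (measureReal_mono hsubU (measure_ne_top _ _)) hδ.le
    _ ≤ P.real (B \ U) - P.real ((B \ U) ∩ V) := by linarith
    _ = P.real (B ∩ ⋂ j ∈ s, (f j)ᶜ) := by
        rw [hsplit]; linarith [measureReal_inter_add_sdiff (μ := P) (s := B \ U) hV]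

theorem measureReal_compl_inter_le_mul_exp {C : Set Ω} (hB : MeasurableSet B) {δ ε : ℝ}
    (hδ : 0 ≤ δ)
    (hBε : P.real B ≤ ε) (hε : ε < 1) (h : (P.real B - δ) * P.real C ≤ P.real (B ∩ C)) :
    P.real (Bᶜ ∩ C) ≤ (1 - P.real B) * exp (δ / (1 - ε)) * P.real C := by
  have hsplit : P.real (Bᶜ ∩ C) = P.real C - P.real (B ∩ C) := by
    rw [Set.inter_comm, ← Set.sdiff_eq, Set.inter_comm]
    linarith [measureReal_inter_add_sdiff (μ := P) (s := C) hB]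
  calc P.real (Bᶜ ∩ C) ≤ (1 - P.real B + δ) * P.real C := by rw [hsplit]; linarith
    _ ≤ (1 - P.real B) * exp (δ / (1 - ε)) * P.real C :=
        mul_le_mul_of_nonneg_right (one_sub_add_le_mul_exp hδ hBε hε) measureReal_nonneg

include hcorr hinter hunion in
theorem measureReal_biInter_compl_le_prod_mul_exp [LinearOrder ι] {f : ι → Set Ω}
    (hf : ∀ j, f j ∈ I) (hfm : ∀ j, MeasurableSet (f j)) (dep : ι → ι → Prop)
    (hneg : ∀ i j, i ≠ j → ¬ dep i j → P.real (f i ∩ f j) ≤ P.real (f i) * P.real (f j))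
    {ε : ℝ} (hfε : ∀ i, P.real (f i) ≤ ε) (hε : ε < 1) (s : Finset ι) :
    P.real (⋂ j ∈ s, (f j)ᶜ) ≤ ∏ i ∈ s, (1 - P.real (f i)) *
      exp ((∑ j ∈ (s.filter (· < i)).filter (dep i), P.real (f i ∩ f j)) / (1 - ε)) := by
  refine Finset.le_prod_filter_lt_of_le_mul_insert (fun s => P.real (⋂ j ∈ s, (f j)ᶜ))
    (fun a s => (1 - P.real (f a)) * exp ((∑ j ∈ s.filter (dep a), P.real (f a ∩ f j)) / (1 - ε)))
    (by simp) (fun a s => mul_nonneg (by linarith [hfε a]) (exp_pos _).le) (fun a s hlt => ?_) s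
  rw [Finset.set_biInter_insert]
  exact measureReal_compl_inter_le_mul_exp (hfm a)
    (Finset.sum_nonneg fun _ _ => measureReal_nonneg) (hfε a) hε
    (sub_sum_mul_measureReal_biInter_compl_le hcorr hinter hunion (hf a) (hfm a) hf hfm s (dep a)
      fun j hj => hneg a j (hlt j hj).ne')

end Correlation

/-- The Boppana–Spencer form of Janson's inequality:
`Pr(X = 0) ≤ ∏ (1 − Pr(A_i)) · exp(Δ/(2(1−ε)))` with `ε = max_i Pr(A_i) < 1`. -/
theorem janson_boppana_spencer_general_upsets
    {Ω : Type*} [MeasurableSpace Ω] (P : Measure Ω) [IsProbabilityMeasure P]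
    (I : Set (Set Ω))
    (hcorr : ∀ A ∈ I, ∀ B ∈ I, P (A ∩ B) ≥ P A * P B)
    (hinter : ∀ A ∈ I, ∀ B ∈ I, A ∩ B ∈ I)
    (hunion : ∀ A ∈ I, ∀ B ∈ I, A ∪ B ∈ I)
    (k : ℕ) (hk : 0 < k) (A : Fin k → Set Ω) (hA : ∀ i, A i ∈ I)
    (hAmeas : ∀ i, MeasurableSet (A i))
    (sim : Fin k → Fin k → Prop)
    (hsim : ∀ i j, sim i j ↔ i ≠ j ∧ P (A i ∩ A j) ≠ P (A i) * P (A j))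
    (ε Δ : ℝ)
    (hε : ε = Finset.univ.sup' (Finset.univ_nonempty_iff.mpr ⟨⟨0, hk⟩⟩)
        (fun i => (P (A i)).toReal))
    (hε1 : ε < 1)
    (hΔ : Δ = ∑ i : Fin k, ∑ j ∈ Finset.univ.filter (fun j => sim i j),
        (P (A i ∩ A j)).toReal) :
    (P (⋂ i, (A i)ᶜ)).toReal
      ≤ (∏ i : Fin k, (1 - (P (A i)).toReal)) * Real.exp (Δ / (2 * (1 - ε))) := by
  simp only [← measureReal_def] at hε hΔ ⊢
  have hcorr' : ∀ B ∈ I, ∀ C ∈ I, P.real B * P.real C ≤ P.real (B ∩ C) := fun B hB C hC => by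
    simpa only [Measure.real, ENNReal.toReal_mul] using
      ENNReal.toReal_mono (measure_ne_top _ _) (hcorr B hB C hC)
  have hneg : ∀ i j, i ≠ j → ¬ sim i j → P.real (A i ∩ A j) ≤ P.real (A i) * P.real (A j) := by
    intro i j hij hnsim
    have hindep : P (A i ∩ A j) = P (A i) * P (A j) := by simpa [hsim, hij] using hnsim
    simp only [Measure.real, hindep, ENNReal.toReal_mul, le_refl]
  have hpε : ∀ i, P.real (A i) ≤ ε := fun i =>
    hε ▸ Finset.le_sup' (fun i => P.real (A i)) (Finset.mem_univ i)
  have hsymm : ∀ i j, sim i j ↔ sim j i := fun i j => by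
    rw [hsim, hsim, ne_comm, Set.inter_comm, mul_comm]
  set T := ∑ i, ∑ j ∈ (univ.filter (· < i)).filter (sim i), P.real (A i ∩ A j)
  have hΔT : Δ = 2 * T := by
    have := Finset.sum_sum_eq_two_nsmul_sum_sum_filter_lt
      (fun i j => if sim i j then P.real (A i ∩ A j) else 0)
      (fun i j => by simp only [hsymm i j, Set.inter_comm]) (fun i => by simp [hsim])
    simpa only [hΔ, T, Finset.sum_filter, nsmul_eq_mul, Nat.cast_ofNat] using this
  have hchain := measureReal_biInter_compl_le_prod_mul_exp hcorr' hinter hunion hA hAmeas sim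
    hneg hpε hε1 univ
  rw [Finset.prod_mul_distrib, ← exp_sum, ← Finset.sum_div] at hchain
  rw [hΔT, mul_div_mul_left _ _ two_ne_zero]
  simpa using hchain
end

section
/- Let A_1, ..., A_k be events in a family I closed under intersections and unions in which any two events are positively correlated, let c_1, ..., c_k > 0, and X = Σ_i c_i 1_{A_i}, μ = E[X]. Let Δ̄ = Σ_i c_i² Pr(A_i) + Σ_i Σ_{j~i} c_i c_j Pr(A_i ∩ A_j). Then for all 0 ≤ t ≤ μ, Pr(X ≤ μ − t) ≤ exp(−t²/(2Δ̄)). -/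
/-!
Laplace-transform proof of Janson's inequality. Write `F(s) = E[e^{-sX}]` and, for each `i`,
split `X = Y_i + Z_i`, where `Z_i` collects `A_i` and the events dependent on it. The factor
`e^{-sY_i} = ∏_j (1 - (1 - e^{-s c_j}) 1_{A_j})` is a nonnegative combination of indicators of
complements of unions of the `A_j`, and such unions stay in `I`. Positive correlation therefore
gives `E[1_{A_i ∩ A_j} e^{-sY_i}] ≤ P(A_i ∩ A_j) E[e^{-sY_i}]`, while the pairwise independence of
`A_i` from the events of `Y_i` propagates to their unions, so that
`E[1_{A_i} e^{-sY_i}] = P(A_i) E[e^{-sY_i}]`. Together with `e^{-sZ} ≥ 1 - sZ` this yields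
`-F'(s) = E[X e^{-sX}] ≥ (μ - sΔ̄) F(s)`, hence `F(s) ≤ exp(-μs + Δ̄s²/2)`, and the Chernoff bound
at `s = t/Δ̄` concludes.
-/

open MeasureTheory ProbabilityTheory Finset Real
open scoped Classical

section

variable {α ι : Type*}

lemma biUnion_mem_of_supClosed {I : Set (Set α)} (hI : SupClosed I)
    {A : ι → Set α} {S : Finset ι} (hS : S.Nonempty) (hA : ∀ j ∈ S, A j ∈ I) :
    ⋃ j ∈ S, A j ∈ I := by
  rw [← Finset.sup_set_eq_biUnion, ← Finset.sup'_eq_sup hS]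
  exact hI.finsetSup'_mem hS hA

lemma prod_one_sub_mul_indicator_eq_sum (A : ι → Set α) (q : ι → ℝ) (T : Finset ι) (x : α) :
    ∏ j ∈ T, (1 - q j * (A j).indicator 1 x) =
      ∑ S ∈ T.powerset, (∏ j ∈ S, q j) * (∏ j ∈ T \ S, (1 - q j)) *
        (⋃ j ∈ S, A j)ᶜ.indicator 1 x := by
  have h : ∀ j ∈ T, 1 - q j * (A j).indicator 1 x = q j * (A j)ᶜ.indicator 1 x + (1 - q j) := by
    intro j _
    rw [Set.indicator_compl, Pi.sub_apply, Pi.one_apply]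
    ring
  rw [prod_congr rfl h, prod_add]
  refine sum_congr rfl fun S _ => ?_
  rw [prod_mul_distrib, prod_indicator_apply, prod_const_one, ← Set.compl_iUnion₂]
  ring

noncomputable def indicatorSum (A : ι → Set α) (c : ι → ℝ) (T : Finset ι) (x : α) : ℝ :=
  ∑ j ∈ T, c j * (A j).indicator 1 x

lemma exp_mul_indicatorSum (A : ι → Set α) (c : ι → ℝ) (t : ℝ) (T : Finset ι) (x : α) :
    exp (t * indicatorSum A c T x) = ∏ j ∈ T, (1 - (1 - exp (t * c j)) * (A j).indicator 1 x) := by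
  rw [indicatorSum, mul_sum, exp_sum]
  refine prod_congr rfl fun j _ => ?_
  by_cases hx : x ∈ A j <;> simp [hx]

lemma indicatorSum_mem_Icc {A : ι → Set α} {c : ι → ℝ} (hc : ∀ j, 0 ≤ c j) (T : Finset ι)
    (x : α) : indicatorSum A c T x ∈ Set.Icc 0 (∑ j ∈ T, c j) := by
  refine ⟨sum_nonneg fun j _ => ?_, sum_le_sum fun j _ => ?_⟩ <;>
    by_cases hx : x ∈ A j <;> simp [hx, hc j]

lemma indicatorSum_le_indicatorSum_of_subset {A : ι → Set α} {c : ι → ℝ} (hc : ∀ j, 0 ≤ c j)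
    {S T : Finset ι} (hST : S ⊆ T) (x : α) : indicatorSum A c S x ≤ indicatorSum A c T x :=
  sum_le_sum_of_subset_of_nonneg hST fun j _ _ =>
    mul_nonneg (hc j) (Set.indicator_nonneg (fun _ _ => zero_le_one) x)

lemma indicator_mul_exp_indicatorSum_compl_sub_le [Fintype ι] (A : ι → Set α) (c : ι → ℝ)
    (D : Finset ι) (i : ι) (s : ℝ) (x : α) :
    (A i).indicator 1 x * exp (-s * indicatorSum A c Dᶜ x) -
        s * ∑ j ∈ D, c j * ((A i ∩ A j).indicator 1 x * exp (-s * indicatorSum A c Dᶜ x)) ≤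
      (A i).indicator 1 x * exp (-s * indicatorSum A c univ x) := by
  set y := indicatorSum A c Dᶜ x
  set z := indicatorSum A c D x
  have h_split : indicatorSum A c univ x = z + y := (sum_add_sum_compl D _).symm
  have h_near : ∑ j ∈ D, c j * ((A i ∩ A j).indicator 1 x * exp (-s * y)) =
      (A i).indicator 1 x * z * exp (-s * y) := by
    simp only [z, indicatorSum, mul_sum, sum_mul, Set.inter_indicator_one, Pi.mul_apply]
    exact sum_congr rfl fun j _ => by ring
  have h_ind : 0 ≤ (A i).indicator (1 : α → ℝ) x :=
    Set.indicator_nonneg (fun _ _ => zero_le_one) x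
  rw [h_near, h_split]
  calc (A i).indicator 1 x * exp (-s * y) - s * ((A i).indicator 1 x * z * exp (-s * y))
      = (A i).indicator 1 x * exp (-s * y) * (-s * z + 1) := by ring
    _ ≤ (A i).indicator 1 x * exp (-s * y) * exp (-s * z) :=
      mul_le_mul_of_nonneg_left (add_one_le_exp _) (mul_nonneg h_ind (exp_pos _).le)
    _ = (A i).indicator 1 x * exp (-s * (z + y)) := by
      rw [mul_assoc, ← exp_add]; ring_nf

lemma le_mul_exp_of_hasDerivAt_le_mul {f f' : ℝ → ℝ} {a b : ℝ}
    (hf : ∀ u, 0 ≤ u → HasDerivAt f (f' u) u) (hf' : ∀ u, 0 ≤ u → f' u ≤ -(a - b * u) * f u)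
    {s : ℝ} (hs : 0 ≤ s) : f s ≤ f 0 * exp (-(a * s) + b * s ^ 2 / 2) := by
  -- Integrating factor: `f · e` is antitone on `[0, ∞)`.
  set e : ℝ → ℝ := fun u => exp (a * u - b * u ^ 2 / 2)
  have he : ∀ u, HasDerivAt e ((a - b * u) * e u) u := fun u => by
    have h := (((hasDerivAt_id u).const_mul a).fun_sub
      (((hasDerivAt_pow 2 u).const_mul b).div_const 2)).exp
    refine h.congr_deriv ?_
    simp only [e, id]
    ring
  have h_anti : AntitoneOn (fun u => f u * e u) (Set.Ici 0) := by
    refine antitoneOn_of_hasDerivWithinAt_nonpos (convex_Ici 0)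
      (fun u hu => ((hf u hu).mul (he u)).continuousAt.continuousWithinAt)
      (fun u hu => ((hf u (interior_subset hu)).mul (he u)).hasDerivWithinAt) fun u hu => ?_
    have h := hf' u (interior_subset hu)
    have he_pos : 0 < e u := exp_pos _
    nlinarith
  have h_le := h_anti Set.self_mem_Ici hs hs
  have h_e0 : e 0 = 1 := by simp [e]
  have h_es : e s * exp (-(a * s) + b * s ^ 2 / 2) = 1 := by
    rw [← exp_add]; ring_nf; exact exp_zero
  calc f s = f s * e s * exp (-(a * s) + b * s ^ 2 / 2) := by rw [mul_assoc, h_es, mul_one]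
    _ ≤ f 0 * exp (-(a * s) + b * s ^ 2 / 2) := by
      gcongr
      simpa [h_e0] using h_le

end

section

variable {Ω ι : Type*} [MeasurableSpace Ω] {P : Measure Ω}
variable {I : Set (Set Ω)} {A : ι → Set Ω}

lemma measureReal_inter_union_eq_mul [IsFiniteMeasure P] {B C D : Set Ω}
    (hB : MeasurableSet B) (hD : MeasurableSet D)
    (hBC : P.real (B ∩ C) = P.real B * P.real C) (hBD : P.real (B ∩ D) = P.real B * P.real D)
    (h_union : P.real B * P.real (C ∪ D) ≤ P.real (B ∩ (C ∪ D)))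
    (h_inter : P.real B * P.real (C ∩ D) ≤ P.real (B ∩ (C ∩ D))) :
    P.real (B ∩ (C ∪ D)) = P.real B * P.real (C ∪ D) := by
  -- Inclusion–exclusion makes the two correlation inequalities add up to an equality.
  have h_CD := congrArg (P.real B * ·) (measureReal_union_add_inter (μ := P) (s := C) hD)
  have h_BCD : P.real (B ∩ (C ∪ D)) + P.real (B ∩ (C ∩ D)) =
      P.real (B ∩ C) + P.real (B ∩ D) := by
    rw [Set.inter_union_distrib_left, Set.inter_inter_distrib_left,
      measureReal_union_add_inter (μ := P) (s := B ∩ C) (hB.inter hD)]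
  simp only [mul_add] at h_CD
  linarith

lemma measureReal_inter_biUnion_eq_mul [IsFiniteMeasure P]
    (hcorr : ∀ B ∈ I, ∀ C ∈ I, P.real B * P.real C ≤ P.real (B ∩ C))
    (hinf : InfClosed I) (hsup : SupClosed I) (hA : ∀ j, A j ∈ I)
    (hAm : ∀ j, MeasurableSet (A j)) {B : Set Ω} (hB : B ∈ I) (hBm : MeasurableSet B)
    {S : Finset ι} (hind : ∀ j ∈ S, P.real (B ∩ A j) = P.real B * P.real (A j)) :
    P.real (B ∩ ⋃ j ∈ S, A j) = P.real B * P.real (⋃ j ∈ S, A j) := by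
  induction S using Finset.induction_on with
  | empty => simp
  | insert a S _ ih =>
    rw [Finset.set_biUnion_insert]
    rcases S.eq_empty_or_nonempty with rfl | hS
    · simpa using hind a (mem_insert_self a ∅)
    have hU := biUnion_mem_of_supClosed hsup hS fun j _ => hA j
    exact measureReal_inter_union_eq_mul hBm (S.measurableSet_biUnion fun j _ => hAm j)
      (hind a (mem_insert_self a S)) (ih fun j hj => hind j (mem_insert_of_mem hj))
      (hcorr B hB _ (hsup (hA a) hU)) (hcorr B hB _ (hinf (hA a) hU))

lemma measurable_indicatorSum (hAm : ∀ j, MeasurableSet (A j)) (c : ι → ℝ) (T : Finset ι) :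
    Measurable (indicatorSum A c T) :=
  Finset.measurable_sum _ fun j _ => (measurable_one.indicator (hAm j)).const_mul (c j)

lemma integrable_indicator_one [IsFiniteMeasure P] {C : Set Ω} (hC : MeasurableSet C) :
    Integrable (C.indicator (1 : Ω → ℝ)) P :=
  (integrable_const 1).indicator hC

lemma integral_indicatorSum [IsFiniteMeasure P] (hAm : ∀ j, MeasurableSet (A j)) (c : ι → ℝ)
    (T : Finset ι) : ∫ ω, indicatorSum A c T ω ∂P = ∑ j ∈ T, c j * P.real (A j) := by
  simp only [indicatorSum]
  rw [integral_finsetSum _ fun j _ => (integrable_indicator_one (hAm j)).const_mul (c j)]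
  simp only [integral_const_mul, integral_indicator_one (hAm _)]

lemma integrable_exp_mul_indicatorSum [IsFiniteMeasure P] (hAm : ∀ j, MeasurableSet (A j))
    {c : ι → ℝ} (hc : ∀ j, 0 ≤ c j) (t : ℝ) (T : Finset ι) :
    Integrable (fun ω => exp (t * indicatorSum A c T ω)) P :=
  integrable_exp_mul_of_mem_Icc (measurable_indicatorSum hAm c T).aemeasurable
    (ae_of_all _ (indicatorSum_mem_Icc hc T))

lemma integrable_indicator_mul_exp_mul_indicatorSum [IsFiniteMeasure P]
    (hAm : ∀ j, MeasurableSet (A j)) {c : ι → ℝ} (hc : ∀ j, 0 ≤ c j) (t : ℝ) (T : Finset ι)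
    {C : Set Ω} (hC : MeasurableSet C) :
    Integrable (fun ω => C.indicator 1 ω * exp (t * indicatorSum A c T ω)) P := by
  refine ((integrable_exp_mul_indicatorSum hAm hc t T).indicator hC).congr
    (ae_of_all _ fun ω => ?_)
  simp only [Set.indicator_apply, Pi.one_apply, ite_mul, one_mul, zero_mul]

lemma integral_indicator_mul_prod_one_sub [IsFiniteMeasure P] (hAm : ∀ j, MeasurableSet (A j))
    (q : ι → ℝ) (T : Finset ι) {C : Set Ω} (hC : MeasurableSet C) :
    ∫ ω, C.indicator 1 ω * ∏ j ∈ T, (1 - q j * (A j).indicator 1 ω) ∂P =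
      ∑ S ∈ T.powerset, (∏ j ∈ S, q j) * (∏ j ∈ T \ S, (1 - q j)) *
        (P.real C - P.real (C ∩ ⋃ j ∈ S, A j)) := by
  have hU : ∀ S : Finset ι, MeasurableSet (C ∩ (⋃ j ∈ S, A j)ᶜ) := fun S =>
    hC.inter (S.measurableSet_biUnion fun j _ => hAm j).compl
  simp_rw [prod_one_sub_mul_indicator_eq_sum, mul_sum, mul_left_comm (C.indicator 1 _),
    ← Pi.mul_apply (C.indicator 1), ← Set.inter_indicator_one]
  rw [integral_finsetSum _ fun S _ => (integrable_indicator_one (hU S)).const_mul _]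
  refine sum_congr rfl fun S _ => ?_
  rw [integral_const_mul, integral_indicator_one (hU S), ← Set.sdiff_eq,
    ← measureReal_inter_add_sdiff (μ := P) (s := C) (S.measurableSet_biUnion fun j _ => hAm j)]
  ring

lemma integral_indicator_mul_prod_one_sub_sub [IsProbabilityMeasure P]
    (hAm : ∀ j, MeasurableSet (A j)) (q : ι → ℝ) (T : Finset ι) {C : Set Ω}
    (hC : MeasurableSet C) :
    ∫ ω, C.indicator 1 ω * ∏ j ∈ T, (1 - q j * (A j).indicator 1 ω) ∂P -
        P.real C * ∫ ω, ∏ j ∈ T, (1 - q j * (A j).indicator 1 ω) ∂P =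
      ∑ S ∈ T.powerset, (∏ j ∈ S, q j) * (∏ j ∈ T \ S, (1 - q j)) *
        (P.real C * P.real (⋃ j ∈ S, A j) - P.real (C ∩ ⋃ j ∈ S, A j)) := by
  have h_univ := integral_indicator_mul_prod_one_sub (P := P) hAm q T MeasurableSet.univ
  simp only [Set.indicator_univ, Pi.one_apply, one_mul, Set.univ_inter, probReal_univ] at h_univ
  rw [integral_indicator_mul_prod_one_sub hAm q T hC, h_univ, mul_sum, ← sum_sub_distrib]
  refine sum_congr rfl fun S _ => ?_
  ring

lemma integral_indicator_mul_prod_one_sub_le [IsProbabilityMeasure P]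
    (hcorr : ∀ B ∈ I, ∀ C ∈ I, P.real B * P.real C ≤ P.real (B ∩ C)) (hsup : SupClosed I)
    (hA : ∀ j, A j ∈ I) (hAm : ∀ j, MeasurableSet (A j)) {q : ι → ℝ}
    (hq : ∀ j, q j ∈ Set.Icc 0 1) (T : Finset ι) {C : Set Ω} (hC : C ∈ I)
    (hCm : MeasurableSet C) :
    ∫ ω, C.indicator 1 ω * ∏ j ∈ T, (1 - q j * (A j).indicator 1 ω) ∂P ≤
      P.real C * ∫ ω, ∏ j ∈ T, (1 - q j * (A j).indicator 1 ω) ∂P := by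
  rw [← sub_nonpos, integral_indicator_mul_prod_one_sub_sub hAm q T hCm]
  refine sum_nonpos fun S _ => mul_nonpos_of_nonneg_of_nonpos ?_ ?_
  · exact mul_nonneg (prod_nonneg fun j _ => (hq j).1)
      (prod_nonneg fun j _ => sub_nonneg.2 (hq j).2)
  · rcases S.eq_empty_or_nonempty with rfl | hS
    · simp
    · exact sub_nonpos.2 (hcorr C hC _ (biUnion_mem_of_supClosed hsup hS fun j _ => hA j))

lemma integral_indicator_mul_prod_one_sub_eq [IsProbabilityMeasure P]
    (hcorr : ∀ B ∈ I, ∀ C ∈ I, P.real B * P.real C ≤ P.real (B ∩ C)) (hinf : InfClosed I)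
    (hsup : SupClosed I) (hA : ∀ j, A j ∈ I) (hAm : ∀ j, MeasurableSet (A j)) (q : ι → ℝ)
    (T : Finset ι) {C : Set Ω} (hC : C ∈ I) (hCm : MeasurableSet C)
    (hind : ∀ j ∈ T, P.real (C ∩ A j) = P.real C * P.real (A j)) :
    ∫ ω, C.indicator 1 ω * ∏ j ∈ T, (1 - q j * (A j).indicator 1 ω) ∂P =
      P.real C * ∫ ω, ∏ j ∈ T, (1 - q j * (A j).indicator 1 ω) ∂P := by
  rw [← sub_eq_zero, integral_indicator_mul_prod_one_sub_sub hAm q T hCm]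
  refine sum_eq_zero fun S hS => ?_
  rw [measureReal_inter_biUnion_eq_mul hcorr hinf hsup hA hAm hC hCm
    fun j hj => hind j (mem_powerset.1 hS hj), sub_self, mul_zero]

lemma mul_integral_exp_le_integral_indicator_mul_exp [Fintype ι] [IsProbabilityMeasure P]
    (hcorr : ∀ B ∈ I, ∀ C ∈ I, P.real B * P.real C ≤ P.real (B ∩ C)) (hinf : InfClosed I)
    (hsup : SupClosed I) (hA : ∀ j, A j ∈ I) (hAm : ∀ j, MeasurableSet (A j))
    {c : ι → ℝ} (hc : ∀ j, 0 ≤ c j) {s : ℝ} (hs : 0 ≤ s) (i : ι) (D : Finset ι)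
    (hD : ∀ j ∉ D, P.real (A i ∩ A j) = P.real (A i) * P.real (A j)) :
    (P.real (A i) - s * ∑ j ∈ D, c j * P.real (A i ∩ A j)) *
        ∫ ω, exp (-s * indicatorSum A c Dᶜ ω) ∂P ≤
      ∫ ω, (A i).indicator 1 ω * exp (-s * indicatorSum A c univ ω) ∂P := by
  set g := fun ω => exp (-s * indicatorSum A c Dᶜ ω)
  have hq : ∀ j, 1 - exp (-s * c j) ∈ Set.Icc 0 1 := fun j =>
    ⟨sub_nonneg.2 (exp_le_one_iff.2 (by nlinarith [hc j])), sub_le_self _ (exp_pos _).le⟩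
  have h_far : ∫ ω, (A i).indicator 1 ω * g ω ∂P = P.real (A i) * ∫ ω, g ω ∂P := by
    simp only [g, exp_mul_indicatorSum]
    exact integral_indicator_mul_prod_one_sub_eq hcorr hinf hsup hA hAm _ _ (hA i) (hAm i)
      fun j hj => hD j (mem_compl.1 hj)
  have h_near : ∀ j, ∫ ω, (A i ∩ A j).indicator 1 ω * g ω ∂P ≤
      P.real (A i ∩ A j) * ∫ ω, g ω ∂P := fun j => by
    simp only [g, exp_mul_indicatorSum]
    exact integral_indicator_mul_prod_one_sub_le hcorr hsup hA hAm hq _ (hinf (hA i) (hA j))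
      ((hAm i).inter (hAm j))
  have h_int : ∀ {C : Set Ω}, MeasurableSet C →
      Integrable (fun ω => C.indicator 1 ω * g ω) P := fun hC =>
    integrable_indicator_mul_exp_mul_indicatorSum hAm hc _ _ hC
  have h_sum : Integrable (fun ω => ∑ j ∈ D, c j * ((A i ∩ A j).indicator 1 ω * g ω)) P :=
    integrable_finsetSum _ fun j _ => (h_int ((hAm i).inter (hAm j))).const_mul _
  calc (P.real (A i) - s * ∑ j ∈ D, c j * P.real (A i ∩ A j)) * ∫ ω, g ω ∂P
      = P.real (A i) * ∫ ω, g ω ∂P - s * ∑ j ∈ D, c j * (P.real (A i ∩ A j) * ∫ ω, g ω ∂P) := by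
        simp only [sub_mul, sum_mul, mul_sum, mul_assoc]
    _ ≤ ∫ ω, (A i).indicator 1 ω * g ω ∂P -
          s * ∑ j ∈ D, c j * ∫ ω, (A i ∩ A j).indicator 1 ω * g ω ∂P := by
        rw [h_far]
        gcongr with j
        exacts [hc j, h_near j]
    _ = ∫ ω, ((A i).indicator 1 ω * g ω -
          s * ∑ j ∈ D, c j * ((A i ∩ A j).indicator 1 ω * g ω)) ∂P := by
        rw [integral_sub (h_int (hAm i)) (h_sum.const_mul s), integral_const_mul,
          integral_finsetSum _ fun j _ => (h_int ((hAm i).inter (hAm j))).const_mul _]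
        simp only [integral_const_mul]
    _ ≤ ∫ ω, (A i).indicator 1 ω * exp (-s * indicatorSum A c univ ω) ∂P :=
        integral_mono ((h_int (hAm i)).sub (h_sum.const_mul s))
          (integrable_indicator_mul_exp_mul_indicatorSum hAm hc _ _ (hAm i))
          (indicator_mul_exp_indicatorSum_compl_sub_le A c D i s)

lemma mul_mgf_le_integral_indicator_mul_exp [Fintype ι] [IsProbabilityMeasure P]
    (hcorr : ∀ B ∈ I, ∀ C ∈ I, P.real B * P.real C ≤ P.real (B ∩ C)) (hinf : InfClosed I)
    (hsup : SupClosed I) (hA : ∀ j, A j ∈ I) (hAm : ∀ j, MeasurableSet (A j))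
    {c : ι → ℝ} (hc : ∀ j, 0 ≤ c j) {s : ℝ} (hs : 0 ≤ s) (i : ι) (D : Finset ι)
    (hD : ∀ j ∉ D, P.real (A i ∩ A j) = P.real (A i) * P.real (A j)) :
    (P.real (A i) - s * ∑ j ∈ D, c j * P.real (A i ∩ A j)) *
        mgf (indicatorSum A c univ) P (-s) ≤
      ∫ ω, (A i).indicator 1 ω * exp (-s * indicatorSum A c univ ω) ∂P := by
  have h_partial : mgf (indicatorSum A c univ) P (-s) ≤
      ∫ ω, exp (-s * indicatorSum A c Dᶜ ω) ∂P :=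
    integral_mono (integrable_exp_mul_indicatorSum hAm hc _ _)
      (integrable_exp_mul_indicatorSum hAm hc _ _) fun ω => exp_le_exp.2 <| by
        nlinarith [indicatorSum_le_indicatorSum_of_subset (A := A) hc (subset_univ Dᶜ) ω]
  have h_rhs : 0 ≤ ∫ ω, (A i).indicator 1 ω * exp (-s * indicatorSum A c univ ω) ∂P :=
    integral_nonneg fun ω =>
      mul_nonneg (Set.indicator_nonneg (fun _ _ => zero_le_one) ω) (exp_pos _).le
  rcases le_or_gt 0 (P.real (A i) - s * ∑ j ∈ D, c j * P.real (A i ∩ A j)) with h | h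
  · exact (mul_le_mul_of_nonneg_left h_partial h).trans
      (mul_integral_exp_le_integral_indicator_mul_exp hcorr hinf hsup hA hAm hc hs i D hD)
  · exact (mul_nonpos_of_nonpos_of_nonneg h.le mgf_nonneg).trans h_rhs

lemma mul_mgf_le_integral_mul_exp [Fintype ι] [IsProbabilityMeasure P]
    (hcorr : ∀ B ∈ I, ∀ C ∈ I, P.real B * P.real C ≤ P.real (B ∩ C)) (hinf : InfClosed I)
    (hsup : SupClosed I) (hA : ∀ j, A j ∈ I) (hAm : ∀ j, MeasurableSet (A j))
    {c : ι → ℝ} (hc : ∀ j, 0 ≤ c j) {s : ℝ} (hs : 0 ≤ s) (D : ι → Finset ι)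
    (hD : ∀ i, ∀ j ∉ D i, P.real (A i ∩ A j) = P.real (A i) * P.real (A j)) :
    (∑ i, c i * P.real (A i) - s * ∑ i, c i * ∑ j ∈ D i, c j * P.real (A i ∩ A j)) *
        mgf (indicatorSum A c univ) P (-s) ≤
      ∫ ω, indicatorSum A c univ ω * exp (-s * indicatorSum A c univ ω) ∂P := by
  set F := mgf (indicatorSum A c univ) P (-s)
  calc (∑ i, c i * P.real (A i) - s * ∑ i, c i * ∑ j ∈ D i, c j * P.real (A i ∩ A j)) * F
      = ∑ i, c i * ((P.real (A i) - s * ∑ j ∈ D i, c j * P.real (A i ∩ A j)) * F) := by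
        simp only [mul_sub, sub_mul, sum_sub_distrib, mul_sum, sum_mul]
        congr 1
        · exact sum_congr rfl fun i _ => by ring
        · exact sum_congr rfl fun i _ => sum_congr rfl fun j _ => by ring
    _ ≤ ∑ i, c i * ∫ ω, (A i).indicator 1 ω * exp (-s * indicatorSum A c univ ω) ∂P :=
        sum_le_sum fun i _ => mul_le_mul_of_nonneg_left
          (mul_mgf_le_integral_indicator_mul_exp hcorr hinf hsup hA hAm hc hs i (D i) (hD i))
          (hc i)
    _ = ∫ ω, indicatorSum A c univ ω * exp (-s * indicatorSum A c univ ω) ∂P := by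
        simp only [← integral_const_mul]
        rw [← integral_finsetSum _ fun i _ =>
          (integrable_indicator_mul_exp_mul_indicatorSum hAm hc _ _ (hAm i)).const_mul _]
        simp only [indicatorSum, sum_mul, mul_assoc]

lemma mgf_indicatorSum_neg_le [Fintype ι] [IsProbabilityMeasure P]
    (hcorr : ∀ B ∈ I, ∀ C ∈ I, P.real B * P.real C ≤ P.real (B ∩ C)) (hinf : InfClosed I)
    (hsup : SupClosed I) (hA : ∀ j, A j ∈ I) (hAm : ∀ j, MeasurableSet (A j))
    {c : ι → ℝ} (hc : ∀ j, 0 ≤ c j) (D : ι → Finset ι)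
    (hD : ∀ i, ∀ j ∉ D i, P.real (A i ∩ A j) = P.real (A i) * P.real (A j)) {s : ℝ}
    (hs : 0 ≤ s) :
    mgf (indicatorSum A c univ) P (-s) ≤
      exp (-((∑ i, c i * P.real (A i)) * s) +
        (∑ i, c i * ∑ j ∈ D i, c j * P.real (A i ∩ A j)) * s ^ 2 / 2) := by
  set X := indicatorSum A c univ
  have h_univ : integrableExpSet X P = Set.univ :=
    Set.eq_univ_of_forall fun t => integrable_exp_mul_indicatorSum hAm hc t univ
  have h_deriv : ∀ u : ℝ, HasDerivAt (fun u => mgf X P (-u))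
      (-∫ ω, X ω * exp (-u * X ω) ∂P) u := fun u => by
    have h := (hasDerivAt_mgf (by rw [h_univ, interior_univ]; trivial)).comp u (hasDerivAt_neg u)
    rwa [mul_neg_one] at h
  have h := le_mul_exp_of_hasDerivAt_le_mul (a := ∑ i, c i * P.real (A i))
    (b := ∑ i, c i * ∑ j ∈ D i, c j * P.real (A i ∩ A j)) (fun u _ => h_deriv u) (fun u hu => by
      have := mul_mgf_le_integral_mul_exp hcorr hinf hsup hA hAm hc hu D hD
      linarith) hs
  simpa [mgf_zero] using h

theorem measureReal_indicatorSum_le_sub_le_exp [Fintype ι] [IsProbabilityMeasure P]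
    (hcorr : ∀ B ∈ I, ∀ C ∈ I, P.real B * P.real C ≤ P.real (B ∩ C)) (hinf : InfClosed I)
    (hsup : SupClosed I) (hA : ∀ j, A j ∈ I) (hAm : ∀ j, MeasurableSet (A j))
    {c : ι → ℝ} (hc : ∀ j, 0 ≤ c j) (D : ι → Finset ι)
    (hD : ∀ i, ∀ j ∉ D i, P.real (A i ∩ A j) = P.real (A i) * P.real (A j)) {t : ℝ}
    (ht : 0 ≤ t) :
    P.real {ω | indicatorSum A c univ ω ≤ ∑ i, c i * P.real (A i) - t} ≤
      exp (-(t ^ 2) / (2 * ∑ i, c i * ∑ j ∈ D i, c j * P.real (A i ∩ A j))) := by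
  set μ := ∑ i, c i * P.real (A i)
  set Δ := ∑ i, c i * ∑ j ∈ D i, c j * P.real (A i ∩ A j)
  rcases le_or_gt Δ 0 with hΔ | hΔ
  · exact measureReal_le_one.trans
      (one_le_exp (div_nonneg_of_nonpos (neg_nonpos.2 (sq_nonneg t)) (by linarith)))
  have hs : 0 ≤ t / Δ := div_nonneg ht hΔ.le
  calc P.real {ω | indicatorSum A c univ ω ≤ μ - t}
      ≤ exp (-(-(t / Δ)) * (μ - t)) * mgf (indicatorSum A c univ) P (-(t / Δ)) :=
        measure_le_le_exp_mul_mgf _ (neg_nonpos.2 hs) (integrable_exp_mul_indicatorSum hAm hc _ _)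
    _ ≤ exp (-(-(t / Δ)) * (μ - t)) * exp (-(μ * (t / Δ)) + Δ * (t / Δ) ^ 2 / 2) := by
        gcongr
        exact mgf_indicatorSum_neg_le hcorr hinf hsup hA hAm hc D hD hs
    _ = exp (-(t ^ 2) / (2 * Δ)) := by
        rw [← exp_add]
        congr 1
        field_simp
        ring

end

/-- The weighted lower-tail Janson inequality
`Pr(X ≤ μ − t) ≤ exp(−t²/(2Δ̄))` for `X = ∑ c_i 1_{A_i}` with positive weights. -/
theorem weighted_janson_lower_tail_general_upsets
    {Ω : Type*} [MeasurableSpace Ω] (P : Measure Ω) [IsProbabilityMeasure P]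
    (I : Set (Set Ω))
    (hcorr : ∀ A ∈ I, ∀ B ∈ I, P (A ∩ B) ≥ P A * P B)
    (hinter : ∀ A ∈ I, ∀ B ∈ I, A ∩ B ∈ I)
    (hunion : ∀ A ∈ I, ∀ B ∈ I, A ∪ B ∈ I)
    (k : ℕ) (A : Fin k → Set Ω) (hA : ∀ i, A i ∈ I)
    (hAmeas : ∀ i, MeasurableSet (A i))
    (c : Fin k → ℝ) (hc : ∀ i, 0 < c i)
    (sim : Fin k → Fin k → Prop)
    (hsim : ∀ i j, sim i j ↔ i ≠ j ∧ P (A i ∩ A j) ≠ P (A i) * P (A j))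
    (X : Ω → ℝ)
    (hX : ∀ ω, X ω = ∑ i : Fin k, c i * (if ω ∈ A i then (1 : ℝ) else 0))
    (μ Δbar : ℝ)
    (hμ : μ = ∫ ω, X ω ∂P)
    (hΔbar : Δbar = ∑ i : Fin k, (c i) ^ 2 * (P (A i)).toReal
        + ∑ i : Fin k, ∑ j ∈ Finset.univ.filter (fun j => sim i j),
            c i * c j * (P (A i ∩ A j)).toReal) :
    ∀ t : ℝ, 0 ≤ t → t ≤ μ →
      (P {ω | X ω ≤ μ - t}).toReal ≤ Real.exp (-(t ^ 2) / (2 * Δbar)) := by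
  intro t ht _
  have hcorr' : ∀ B ∈ I, ∀ C ∈ I, P.real B * P.real C ≤ P.real (B ∩ C) := fun B hB C hC => by
    simpa only [measureReal_def, ENNReal.toReal_mul] using
      ENNReal.toReal_mono (measure_ne_top _ _) (hcorr B hB C hC)
  set D : Fin k → Finset (Fin k) := fun i => insert i (univ.filter (sim i))
  have hD : ∀ i, ∀ j ∉ D i, P.real (A i ∩ A j) = P.real (A i) * P.real (A j) := by
    intro i j hj
    simp only [D, mem_insert, mem_filter, mem_univ, true_and, not_or, hsim, not_and,
      not_not] at hj
    simp [measureReal_def, hj.2 (Ne.symm hj.1)]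
  have hX' : X = indicatorSum A c univ :=
    funext fun ω => by simp [hX, indicatorSum, Set.indicator_apply]
  have hμ' : μ = ∑ i, c i * P.real (A i) := by rw [hμ, hX', integral_indicatorSum hAmeas]
  have hΔ' : Δbar = ∑ i, c i * ∑ j ∈ D i, c j * P.real (A i ∩ A j) := by
    rw [hΔbar, ← sum_add_distrib]
    refine sum_congr rfl fun i _ => ?_
    rw [sum_insert (by simp [hsim]), Set.inter_self, mul_add, mul_sum]
    simp only [measureReal_def, mul_assoc, sq]
  rw [hX', hμ', hΔ']
  exact measureReal_indicatorSum_le_sub_le_exp hcorr' (fun _ ha _ hb => hinter _ ha _ hb)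
    (fun _ ha _ hb => hunion _ ha _ hb) hA hAmeas (fun i => (hc i).le) D hD ht
end

section
/- Let A_1, ..., A_k be increasing events in a finite product probability space {0,1}^S and i ~ j iff i ≠ j and A_i, A_j are dependent. Fix i and s ≥ 0, and set J = Σ_{j≠i, j≁i} 1_{A_j}. Then the event A_i is independent of the random variable J; in particular E[1_{A_i} e^{−sJ}] = Pr(A_i) E[e^{−sJ}]. -/
open MeasureTheory Finset Real
open scoped Classical

/-!
Point masses of a product measure on `S → Bool` are log-modular, so the FKG inequality gives
Harris' inequality: increasing events are positively correlated. If an increasing `A` is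
independent of increasing `B` and `C`, Harris bounds `μ (A ∩ (B ∪ C))` and `μ (A ∩ (B ∩ C))`
from below by `μ A * μ (B ∪ C)` and `μ A * μ (B ∩ C)`, while inclusion–exclusion makes the two
sums equal; so both bounds are equalities and `A` is independent of `B ∩ C`. Hence `A_i` is
independent of every finite intersection of the `A_j` with `j ≠ i`, `j ≁ i`. These form a
π-system, so `A_i` is independent of the σ-algebra they generate, for which `J` is measurable.
-/

theorem MeasureTheory.Measure.pi_singleton_inf_mul_pi_singleton_sup_s16 {ι : Type*} [Fintype ι]
    {X : ι → Type*} [∀ j, LinearOrder (X j)] [∀ j, MeasurableSpace (X j)]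
    (μ : ∀ j, Measure (X j)) [∀ j, SigmaFinite (μ j)] (a b : ∀ j, X j) :
    Measure.pi μ {a ⊓ b} * Measure.pi μ {a ⊔ b} = Measure.pi μ {a} * Measure.pi μ {b} := by
  simp only [Measure.pi_singleton, ← Finset.prod_mul_distrib]
  refine Finset.prod_congr rfl fun j _ => ?_
  rcases le_total (a j) (b j) with h | h
  · simp [h]
  · simp [h, mul_comm]

open ProbabilityTheory MeasurableSpace

section FiniteDistribLattice

variable {α : Type*} [Fintype α] [DistribLattice α] [MeasurableSpace α]
  [MeasurableSingletonClass α] {μ : Measure α} [IsProbabilityMeasure μ]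

theorem IsUpperSet.measure_mul_le_measure_inter
    (hμ : ∀ a b, μ {a} * μ {b} ≤ μ {a ⊓ b} * μ {a ⊔ b})
    {A B : Set α} (hA : IsUpperSet A) (hB : IsUpperSet B) :
    μ A * μ B ≤ μ (A ∩ B) := by
  have hmono {C : Set α} (hC : IsUpperSet C) : Monotone (C.indicator (1 : α → ℝ)) := by
    intro a b hab
    by_cases ha : a ∈ C
    · simp [ha, hC hab ha]
    · simp [ha, Set.indicator_nonneg]
  have hsum (C : Set α) : ∑ a, μ.real {a} * C.indicator 1 a = μ.real C := by
    simp [Set.indicator_apply, ← Finset.sum_filter]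
  have key := fkg (A.indicator 1) (B.indicator 1) (fun a => μ.real {a})
    (fun _ => measureReal_nonneg)
    (Set.indicator_nonneg fun _ _ => zero_le_one) (Set.indicator_nonneg fun _ _ => zero_le_one)
    (hmono hA) (hmono hB) (fun a b => by
      simpa [measureReal_def, ENNReal.toReal_mul] using
        ENNReal.toReal_mono (by finiteness) (hμ a b))
  have hmul (a : α) : A.indicator (1 : α → ℝ) a * B.indicator 1 a = (A ∩ B).indicator 1 a := by
    rw [Set.inter_indicator_one, Pi.mul_apply]
  have htotal : ∑ a, μ.real {a} = 1 := by
    rw [sum_measureReal_singleton, Finset.coe_univ, probReal_univ]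
  simp only [hmul, hsum, htotal, one_mul] at key
  rwa [← ENNReal.toReal_le_toReal (by finiteness) (by finiteness), ENNReal.toReal_mul]

theorem IsUpperSet.measure_inter_inter_eq_mul
    (hμ : ∀ a b, μ {a} * μ {b} ≤ μ {a ⊓ b} * μ {a ⊔ b})
    {A B C : Set α} (hA : IsUpperSet A) (hB : IsUpperSet B) (hC : IsUpperSet C)
    (hAB : μ (A ∩ B) = μ A * μ B) (hAC : μ (A ∩ C) = μ A * μ C) :
    μ (A ∩ (B ∩ C)) = μ A * μ (B ∩ C) := by
  have hsum : μ (A ∩ (B ∪ C)) + μ (A ∩ (B ∩ C)) = μ A * μ (B ∪ C) + μ A * μ (B ∩ C) := by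
    rw [← mul_add, measure_union_add_inter _ C.toFinite.measurableSet, mul_add, ← hAB, ← hAC,
      Set.inter_union_distrib_left, Set.inter_inter_distrib_left,
      measure_union_add_inter _ (A ∩ C).toFinite.measurableSet]
  refine le_antisymm ?_ (hA.measure_mul_le_measure_inter hμ (hB.inter hC))
  have hunion := hA.measure_mul_le_measure_inter hμ (hB.union hC)
  refine (ENNReal.add_le_add_iff_left (measure_ne_top μ (A ∩ (B ∪ C)))).1 ?_
  calc μ (A ∩ (B ∪ C)) + μ (A ∩ (B ∩ C)) = μ A * μ (B ∪ C) + μ A * μ (B ∩ C) := hsum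
    _ ≤ μ (A ∩ (B ∪ C)) + μ A * μ (B ∩ C) := by gcongr

theorem IsUpperSet.measure_inter_biInter_eq_mul
    (hμ : ∀ a b, μ {a} * μ {b} ≤ μ {a ⊓ b} * μ {a ⊔ b})
    {ι : Type*} {A : Set α} {B : ι → Set α} (hA : IsUpperSet A) (T : Finset ι)
    (hB : ∀ j ∈ T, IsUpperSet (B j)) (hAB : ∀ j ∈ T, μ (A ∩ B j) = μ A * μ (B j)) :
    μ (A ∩ ⋂ j ∈ T, B j) = μ A * μ (⋂ j ∈ T, B j) := by
  induction T using Finset.induction_on with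
  | empty => simp
  | insert j T _ ih =>
    rw [Finset.set_biInter_insert]
    exact hA.measure_inter_inter_eq_mul hμ (hB j (mem_insert_self j T))
      (isUpperSet_iInter₂ fun j' hj' => hB j' (mem_insert_of_mem hj'))
      (hAB j (mem_insert_self j T))
      (ih (fun j' hj' => hB j' (mem_insert_of_mem hj'))
        (fun j' hj' => hAB j' (mem_insert_of_mem hj')))

end FiniteDistribLattice

theorem ProbabilityTheory.indep_generateFrom_singleton_of_measure_inter_biInter
    {Ω ι : Type*} [MeasurableSpace Ω] {μ : Measure Ω} [IsZeroOrProbabilityMeasure μ]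
    {A : Set Ω} {B : ι → Set Ω} {S : Set ι} (hA : MeasurableSet A)
    (hB : ∀ j ∈ S, MeasurableSet (B j))
    (h : ∀ T : Finset ι, ↑T ⊆ S → μ (A ∩ ⋂ j ∈ T, B j) = μ A * μ (⋂ j ∈ T, B j)) :
    Indep (generateFrom {A}) (generateFrom {t | ∃ j ∈ S, B j = t}) μ := by
  rw [← generateFrom_piiUnionInter_singleton_left]
  refine IndepSets.indep' (by simpa) ?_ (IsPiSystem.singleton A)
    (isPiSystem_piiUnionInter _ (fun j => IsPiSystem.singleton (B j)) S) ?_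
  · rintro _ ⟨T, hT, f, hf, rfl⟩
    exact Finset.measurableSet_biInter _ fun j hj => (hf j hj) ▸ hB j (hT hj)
  · rw [IndepSets_iff]
    rintro _ _ rfl ⟨T, hT, f, hf, rfl⟩
    rw [Set.iInter₂_congr fun j hj => (hf j hj : f j = B j)]
    exact h T hT

theorem indep_of_count_of_independent_events_general
    {S : Type*} [Fintype S] (μs : S → Measure Bool) [∀ s, IsProbabilityMeasure (μs s)]
    (k : ℕ) (A : Fin k → Set (S → Bool))
    (hAinc : ∀ i, ∀ ω ω' : S → Bool, (∀ s, ω s ≤ ω' s) → ω ∈ A i → ω' ∈ A i)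
    (sim : Fin k → Fin k → Prop)
    (hsim : ∀ i j, sim i j ↔ i ≠ j ∧
      Measure.pi μs (A i ∩ A j) ≠ Measure.pi μs (A i) * Measure.pi μs (A j))
    (i : Fin k) (s : ℝ)
    (J : (S → Bool) → ℝ)
    (hJ : ∀ ω, J ω = ∑ j ∈ Finset.univ.filter (fun j => j ≠ i ∧ ¬ sim i j),
        (if ω ∈ A j then (1 : ℝ) else 0)) :
    (∀ B : Set ℝ, MeasurableSet B →
      Measure.pi μs (A i ∩ J ⁻¹' B) = Measure.pi μs (A i) * Measure.pi μs (J ⁻¹' B)) ∧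
    (∫ ω, (if ω ∈ A i then (1 : ℝ) else 0) * Real.exp (-s * J ω) ∂Measure.pi μs)
      = (Measure.pi μs (A i)).toReal * ∫ ω, Real.exp (-s * J ω) ∂Measure.pi μs := by
  set F := Finset.univ.filter (fun j => j ≠ i ∧ ¬ sim i j)
  have hup (j : Fin k) : IsUpperSet (A j) := fun ω ω' h => hAinc j ω ω' h
  have hpair (j : Fin k) (hj : j ∈ F) :
      Measure.pi μs (A i ∩ A j) = Measure.pi μs (A i) * Measure.pi μs (A j) := by
    obtain ⟨hji, hnsim⟩ := (mem_filter.1 hj).2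
    by_contra hne
    exact hnsim ((hsim i j).2 ⟨hji.symm, hne⟩)
  have hind := indep_generateFrom_singleton_of_measure_inter_biInter (S := (F : Set (Fin k)))
    (A i).toFinite.measurableSet (fun j _ => (A j).toFinite.measurableSet)
    fun T hT => (hup i).measure_inter_biInter_eq_mul
      (fun a b => (Measure.pi_singleton_inf_mul_pi_singleton_sup_s16 μs a b).ge) T
      (fun j _ => hup j) fun j hj => hpair j (hT hj)
  have hAi : MeasurableSet[generateFrom {A i}] (A i) := measurableSet_generateFrom rfl
  have hJm : Measurable[generateFrom {t | ∃ j ∈ (F : Set (Fin k)), A j = t}] J := by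
    rw [funext hJ]
    exact Finset.measurable_sum _ fun j hj =>
      Measurable.ite (measurableSet_generateFrom ⟨j, hj, rfl⟩) measurable_const measurable_const
  refine ⟨fun B hB => (Indep_iff _ _ _).1 hind _ _ hAi (hJm hB), ?_⟩
  have hfg : IndepFun (fun ω => if ω ∈ A i then (1 : ℝ) else 0) (fun ω => Real.exp (-s * J ω))
      (Measure.pi μs) :=
    (IndepFun_iff_Indep _ _ _).2 <| indep_of_indep_of_le_left
      (indep_of_indep_of_le_right hind (hJm.const_mul (-s)).exp.comap_le)
      (Measurable.ite hAi measurable_const measurable_const).comap_le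
  refine (hfg.integral_mul_eq_mul_integral Integrable.of_finite.aestronglyMeasurable
    Integrable.of_finite.aestronglyMeasurable).trans ?_
  exact congrArg (· * _) (integral_indicator_one (A i).toFinite.measurableSet)

/-- For increasing events in a finite product space, `A_i` is independent of the random
variable `J = ∑_{j≠i, j≁i} 1_{A_j}`; in particular `E[1_{A_i} e^{−sJ}] = Pr(A_i) E[e^{−sJ}]`. -/
theorem indep_of_count_of_independent_events
    {S : Type*} [Fintype S] (μs : S → Measure Bool) [∀ s, IsProbabilityMeasure (μs s)]
    (k : ℕ) (A : Fin k → Set (S → Bool))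
    (hAinc : ∀ i, ∀ ω ω' : S → Bool, (∀ s, ω s ≤ ω' s) → ω ∈ A i → ω' ∈ A i)
    (hAmeas : ∀ i, MeasurableSet (A i))
    (sim : Fin k → Fin k → Prop)
    (hsim : ∀ i j, sim i j ↔ i ≠ j ∧
      Measure.pi μs (A i ∩ A j) ≠ Measure.pi μs (A i) * Measure.pi μs (A j))
    (i : Fin k) (s : ℝ) (hs : 0 ≤ s)
    (J : (S → Bool) → ℝ)
    (hJ : ∀ ω, J ω = ∑ j ∈ Finset.univ.filter (fun j => j ≠ i ∧ ¬ sim i j),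
        (if ω ∈ A j then (1 : ℝ) else 0)) :
    (∀ B : Set ℝ, MeasurableSet B →
      Measure.pi μs (A i ∩ J ⁻¹' B) = Measure.pi μs (A i) * Measure.pi μs (J ⁻¹' B)) ∧
    (∫ ω, (if ω ∈ A i then (1 : ℝ) else 0) * Real.exp (-s * J ω) ∂Measure.pi μs)
      = (Measure.pi μs (A i)).toReal * ∫ ω, Real.exp (-s * J ω) ∂Measure.pi μs :=
  indep_of_count_of_independent_events_general μs k A hAinc sim hsim i s J hJ
end

section
/- Let I be the collection of all increasing events in a finite product probability space {0,1}^S with product measure. Then I satisfies: (i) Pr(A ∩ B) ≥ Pr(A)Pr(B) for all A, B ∈ I, and (ii) A ∩ B ∈ I and A ∪ B ∈ I for all A, B ∈ I. -/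
/-!
On a product of chains the product measure is log-supermodular on points, with equality even,
since coordinatewise `{aₛ ⊓ bₛ, aₛ ⊔ bₛ} = {aₛ, bₛ}`. The FKG inequality applied to the
indicators of two increasing events is then Harris's Lemma.
-/

open MeasureTheory

def IsLogSupermodular {α β : Type*} [Lattice α] [Mul β] [LE β] (w : α → β) : Prop :=
  ∀ a b, w a * w b ≤ w (a ⊓ b) * w (a ⊔ b)

theorem IsUpperSet.monotone_indicator_one_s18 {α β : Type*} [Preorder α] [Zero β] [One β]
    [Preorder β] [ZeroLEOneClass β] {s : Set α} (hs : IsUpperSet s) :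
    Monotone (s.indicator (1 : α → β)) := fun a b hab ↦ by
  by_cases ha : a ∈ s
  · simp [ha, hs hab ha]
  · simp [ha, Set.indicator_nonneg]

section FKG

variable {α : Type*} [DistribLattice α] [Fintype α] [MeasurableSpace α]
  [MeasurableSingletonClass α] {μ : Measure α} [IsProbabilityMeasure μ]

theorem integral_mul_integral_le_integral_mul_of_monotone
    (hμ : IsLogSupermodular fun a ↦ μ.real {a}) {f g : α → ℝ} (hf₀ : 0 ≤ f) (hg₀ : 0 ≤ g)
    (hf : Monotone f) (hg : Monotone g) :
    (∫ a, f a ∂μ) * ∫ a, g a ∂μ ≤ ∫ a, f a * g a ∂μ := by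
  have hμ_sum : ∑ a, μ.real {a} = 1 := by simp
  simp only [integral_fintype Integrable.of_finite, smul_eq_mul]
  simpa [hμ_sum] using fkg f g _ (fun _ ↦ measureReal_nonneg) hf₀ hg₀ hf hg hμ

theorem measure_mul_le_measure_inter_of_isUpperSet
    (hμ : IsLogSupermodular fun a ↦ μ {a}) {A B : Set α} (hA : IsUpperSet A) (hB : IsUpperSet B) :
    μ A * μ B ≤ μ (A ∩ B) := by
  have hμ_real : IsLogSupermodular fun a ↦ μ.real {a} := fun a b ↦ by
    simpa only [measureReal_def, ENNReal.toReal_mul] using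
      ENNReal.toReal_mono (by finiteness) (hμ a b)
  have key : (∫ a, A.indicator 1 a ∂μ) * ∫ a, B.indicator 1 a ∂μ ≤
      ∫ a, (A ∩ B).indicator (1 : α → ℝ) a ∂μ := by
    simpa only [Set.inter_indicator_one, Pi.mul_apply] using
      integral_mul_integral_le_integral_mul_of_monotone hμ_real (f := A.indicator 1)
        (g := B.indicator 1) (Set.indicator_nonneg fun _ _ ↦ zero_le_one)
        (Set.indicator_nonneg fun _ _ ↦ zero_le_one)
        hA.monotone_indicator_one_s18 hB.monotone_indicator_one_s18
  simp only [integral_indicator_one (Set.toFinite _).measurableSet] at key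
  rwa [← ENNReal.toReal_le_toReal (by finiteness) (by finiteness), ENNReal.toReal_mul]

end FKG

theorem MeasureTheory.Measure.isLogSupermodular_pi_singleton {ι : Type*} [Fintype ι]
    {α : ι → Type*} [∀ i, LinearOrder (α i)] [∀ i, MeasurableSpace (α i)]
    (μ : ∀ i, Measure (α i)) [∀ i, SigmaFinite (μ i)] :
    IsLogSupermodular fun a ↦ Measure.pi μ {a} := fun a b ↦ by
  simp only [Measure.pi_singleton, ← Finset.prod_mul_distrib]
  refine le_of_eq (Finset.prod_congr rfl fun i _ ↦ ?_)
  rcases le_total (a i) (b i) with h | h <;> simp [h, mul_comm]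

/-- The collection of increasing events in a finite product probability space `{0,1}^S`
satisfies positive correlation (Harris's Lemma) and is closed under intersections and
unions. -/
theorem increasing_events_posCorr_and_closed
    {S : Type*} [Fintype S] (μs : S → Measure Bool) [∀ s, IsProbabilityMeasure (μs s)]
    (I : Set (Set (S → Bool)))
    (hI : I = {A | ∀ ω ω' : S → Bool, (∀ s, ω s ≤ ω' s) → ω ∈ A → ω' ∈ A}) :
    (∀ A ∈ I, ∀ B ∈ I, Measure.pi μs (A ∩ B) ≥ Measure.pi μs A * Measure.pi μs B) ∧
    (∀ A ∈ I, ∀ B ∈ I, A ∩ B ∈ I ∧ A ∪ B ∈ I) := by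
  classical
  obtain rfl : I = {A | IsUpperSet A} := hI
  exact ⟨fun A hA B hB ↦ measure_mul_le_measure_inter_of_isUpperSet
      (Measure.isLogSupermodular_pi_singleton μs) hA hB,
    fun A hA B hB ↦ ⟨hA.inter hB, hA.union hB⟩⟩
end
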